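/- arXiv:2508.10452 — 10 statements merged into one kernel-verified Lean document; each statement's English description precedes it below -/
import Mathlib

section
/- For integers n ≤ k ≤ m, the k-th derivative of (x-1)^(m-n)·x^n equals ((m-n)!/(m-k)!) · x^(n-k) · (the n-th derivative of (x-1)^(m-k)·x^k). -/
/-!
Expand both sides by the Leibniz rule. After multiplying by `X ^ (k - n)`, the `i`-th terms on
both sides are multiples of the same monomial `(X - 1) ^ (m - n - (k - i)) * X ^ (k - i)`, and the
terms with `n < i` on the left vanish. The coefficients match because
`choose k i * n.descFactorial i = choose n i * k.descFactorial i`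
(both are `k! n! / (i! (k-i)! (n-i)!)`) and
`(m - n).descFactorial (k - i) * (m - k)! = (m - n)! * (m - k).descFactorial (n - i)`.
-/

open Polynomial
open scoped Nat

theorem Nat.descFactorial_mul_factorial_eq {p q j l : ℕ} (h : p + l = q + j) :
    p.descFactorial j * q ! = p ! * q.descFactorial l := by
  rcases le_or_gt j p with hjp | hpj
  · have hlq : l ≤ q := by omega
    rw [← Nat.factorial_mul_descFactorial hlq, ← Nat.factorial_mul_descFactorial hjp,
      show q - l = p - j by omega]
    ring
  · rw [Nat.descFactorial_eq_zero_iff_lt.2 hpj, Nat.descFactorial_eq_zero_iff_lt.2 (by omega)]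
    simp

theorem Nat.choose_mul_descFactorial_comm (k n i : ℕ) :
    k.choose i * n.descFactorial i = n.choose i * k.descFactorial i := by
  rw [Nat.descFactorial_eq_factorial_mul_choose, Nat.descFactorial_eq_factorial_mul_choose]
  ring

theorem Polynomial.iterate_derivative_X_sub_C_pow_mul_X_pow {R : Type*} [CommRing R]
    (c : R) (a b k : ℕ) :
    derivative^[k] ((X - C c) ^ a * X ^ b) =
      ∑ i ∈ Finset.range (k + 1), (k.choose i * a.descFactorial (k - i) * b.descFactorial i) •
        ((X - C c) ^ (a - (k - i)) * X ^ (b - i)) := by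
  rw [iterate_derivative_mul]
  refine Finset.sum_congr rfl fun i _ => ?_
  rw [iterate_derivative_X_sub_pow, iterate_derivative_X_pow_eq_smul, Nat.cast_smul_eq_nsmul,
    smul_mul_smul_comm, smul_smul, mul_assoc]

theorem leibniz_coeff_mul_factorial {n k m i : ℕ} (hnk : n ≤ k) (hkm : k ≤ m)
    (hin : i ≤ n) :
    k.choose i * (m - n).descFactorial (k - i) * n.descFactorial i * (m - k)! =
      (m - n)! * (n.choose i * (m - k).descFactorial (n - i) * k.descFactorial i) := by
  have hfac :
      (m - n).descFactorial (k - i) * (m - k)! = (m - n)! * (m - k).descFactorial (n - i) :=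
    Nat.descFactorial_mul_factorial_eq (by omega)
  calc k.choose i * (m - n).descFactorial (k - i) * n.descFactorial i * (m - k)!
      = (k.choose i * n.descFactorial i) * ((m - n).descFactorial (k - i) * (m - k)!) := by ring
    _ = (n.choose i * k.descFactorial i) * ((m - n)! * (m - k).descFactorial (n - i)) := by
      rw [Nat.choose_mul_descFactorial_comm, hfac]
    _ = (m - n)! * (n.choose i * (m - k).descFactorial (n - i) * k.descFactorial i) := by ring

/-- For integers `n ≤ k ≤ m`, the `k`-th derivative of `(x-1)^(m-n) * x^n` equals
`((m-n)!/(m-k)!) * x^(n-k)` times the `n`-th derivative of `(x-1)^(m-k) * x^k`.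
Stated multiplied through by `x^(k-n)` to stay in the polynomial ring. -/
theorem stmt_0 (n k m : ℕ) (hnk : n ≤ k) (hkm : k ≤ m) :
    (X : Polynomial ℝ) ^ (k - n) * (derivative^[k] ((X - 1) ^ (m - n) * X ^ n)) =
      C ((Nat.factorial (m - n) : ℝ) / (Nat.factorial (m - k) : ℝ)) *
        derivative^[n] ((X - 1) ^ (m - k) * X ^ k) := by
  rw [← C_1, iterate_derivative_X_sub_C_pow_mul_X_pow, iterate_derivative_X_sub_C_pow_mul_X_pow,
    Finset.mul_sum, Finset.mul_sum]
  have hvanish : ∀ i ∈ Finset.range (k + 1), i ∉ Finset.range (n + 1) →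
      (X : ℝ[X]) ^ (k - n) * ((k.choose i * (m - n).descFactorial (k - i) * n.descFactorial i) •
        ((X - C 1) ^ (m - n - (k - i)) * X ^ (n - i))) = 0 := by
    intro i _ hi
    rw [Nat.descFactorial_eq_zero_iff_lt.2 (show n < i by simpa using hi)]
    simp
  rw [← Finset.sum_subset (Finset.range_subset_range.2 (by omega)) hvanish]
  refine Finset.sum_congr rfl fun i hi => ?_
  have hin : i ≤ n := Nat.lt_succ_iff.1 (Finset.mem_range.1 hi)
  have hcoeff : ((k.choose i * (m - n).descFactorial (k - i) * n.descFactorial i : ℕ) : ℝ) =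
      (m - n)! / (m - k)! *
        (n.choose i * (m - k).descFactorial (n - i) * k.descFactorial i : ℕ) := by
    rw [div_mul_eq_mul_div, eq_div_iff (by positivity)]
    exact_mod_cast leibniz_coeff_mul_factorial hnk hkm hin
  rw [← Nat.cast_smul_eq_nsmul ℝ, ← Nat.cast_smul_eq_nsmul ℝ, hcoeff,
    show m - n - (k - i) = m - k - (n - i) by omega, ← show k - n + (n - i) = k - i by omega]
  simp only [smul_eq_C_mul, map_mul, pow_add]
  ring
end

section
/- Let g(x) = n(n-1)(1-x)^2 + 2n(m-n)x(x-1) + (m-n)(m-n-1)x^2, where 2 ≤ n < m are integers. Then the smallest real root of g is (n - √(n(m-n)/(m-1)))/m. -/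
theorem isLeast_quadratic_roots {K : Type*} [Field K] [LinearOrder K] [IsStrictOrderedRing K]
    {a b c s : K} (ha : 0 < a) (hs : 0 ≤ s) (h : discrim a b c = s * s) :
    IsLeast {x | a * (x * x) + b * x + c = 0} ((-b - s) / (2 * a)) := by
  refine ⟨(quadratic_eq_zero_iff ha.ne' h _).2 (Or.inr rfl), fun x hx => ?_⟩
  rcases (quadratic_eq_zero_iff ha.ne' h x).1 hx with rfl | rfl
  · gcongr
    linarith
  · exact le_rfl

/-- Let `g(x) = n(n-1)(1-x)² + 2n(m-n)x(x-1) + (m-n)(m-n-1)x²` with integers `2 ≤ n < m`.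
Then the smallest real root of `g` is `(n - √(n(m-n)/(m-1)))/m`. -/
theorem stmt_2 (n m : ℕ) (hn : 2 ≤ n) (hnm : n < m) :
    IsLeast {x : ℝ |
        (n : ℝ) * ((n : ℝ) - 1) * (1 - x) ^ 2 + 2 * n * ((m : ℝ) - n) * x * (x - 1) +
          ((m : ℝ) - n) * ((m : ℝ) - n - 1) * x ^ 2 = 0}
      (((n : ℝ) - Real.sqrt ((n : ℝ) * ((m : ℝ) - n) / ((m : ℝ) - 1))) / m) := by
  have hm : (1 : ℝ) < m := by exact_mod_cast (by omega : 1 < m)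
  have hnm' : (n : ℝ) < m := by exact_mod_cast hnm
  set r := Real.sqrt ((n : ℝ) * ((m : ℝ) - n) / ((m : ℝ) - 1))
  have hr : r * r = n * (m - n) / (m - 1) := Real.mul_self_sqrt (by positivity)
  -- `g x = m(m-1) x² - 2n(m-1) x + n(n-1)`, whose discriminant is `4(m-1)n(m-n) = (2(m-1)r)²`.
  have hdiscrim : discrim ((m : ℝ) * (m - 1)) (-2 * n * (m - 1)) (n * (n - 1))
      = (2 * (m - 1) * r) * (2 * (m - 1) * r) := by
    rw [discrim, show (2 * (m - 1) * r) * (2 * (m - 1) * r) = 4 * (m - 1) ^ 2 * (r * r) by ring,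
      hr]
    field_simp
    ring
  have hquadratic : ∀ x : ℝ,
      (n : ℝ) * ((n : ℝ) - 1) * (1 - x) ^ 2 + 2 * n * ((m : ℝ) - n) * x * (x - 1) +
        ((m : ℝ) - n) * ((m : ℝ) - n - 1) * x ^ 2
      = m * (m - 1) * (x * x) + -2 * n * (m - 1) * x + n * (n - 1) := fun x => by ring
  have hroot : ((n : ℝ) - r) / m = (-(-2 * n * (m - 1)) - 2 * (m - 1) * r) / (2 * (m * (m - 1))) := by
    field_simp [show (m : ℝ) - 1 ≠ 0 by linarith]
  simp only [hquadratic, hroot]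
  exact isLeast_quadratic_roots (by positivity) (by positivity) hdiscrim
end

section
/- For integers k, n, m with 1 ≤ k ≤ n and m ≥ n+1, define g(x) = Σ_{i=0}^{min(m-n,k)} (-1)^i · (n!/(n-k+i)!) · ((m-n)!/(m-n-i)!) · C(k,i) x^i (1-x)^{k-i}. Then the coefficient of x^k in g is (-1)^k Σ_{i=0}^{min(m-n,k)} C(k,i) · (n!/(n-k+i)!) · ((m-n)!/(m-n-i)!), which is nonzero; hence g has degree exactly k. -/
/-!
Expanding `x^i (1-x)^(k-i)`, its `x^k`-coefficient is `(-1)^(k-i)`, so the sign `(-1)^i` built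
into the `i`-th weight turns every contribution into `(-1)^k` times a positive number. The
leading coefficient is therefore `(-1)^k` times a sum of positive terms, hence nonzero, and the
degree is exactly `k`.
-/

open Polynomial Finset

section OneSubX

variable {R : Type*} [CommRing R]

lemma natDegree_one_sub_X_le : (1 - X : R[X]).natDegree ≤ 1 :=
  natDegree_sub_le_of_le natDegree_one.le natDegree_X_le

lemma natDegree_one_sub_X_pow_le (j : ℕ) : ((1 - X : R[X]) ^ j).natDegree ≤ j := by
  simpa using natDegree_pow_le_of_le j (natDegree_one_sub_X_le (R := R))

lemma coeff_one_sub_X_pow_self (j : ℕ) : ((1 - X : R[X]) ^ j).coeff j = (-1) ^ j := by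
  simpa [coeff_one] using coeff_pow_of_natDegree_le (m := j) (natDegree_one_sub_X_le (R := R))

lemma natDegree_C_mul_X_pow_mul_one_sub_X_pow_le (c : R) (i j : ℕ) :
    (C c * X ^ i * (1 - X) ^ j).natDegree ≤ i + j := by
  rw [mul_assoc]
  refine natDegree_C_mul_le _ _ |>.trans <| natDegree_mul_le.trans ?_
  exact add_le_add (natDegree_X_pow_le i) (natDegree_one_sub_X_pow_le j)

lemma coeff_C_mul_X_pow_mul_one_sub_X_pow {i k : ℕ} (c : R) (hik : i ≤ k) :
    (C c * X ^ i * (1 - X) ^ (k - i)).coeff k = (-1) ^ (k - i) * c := by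
  rw [mul_assoc, coeff_C_mul, coeff_X_pow_mul', if_pos hik, coeff_one_sub_X_pow_self, mul_comm]

variable {k : ℕ} {s : Finset ℕ}

lemma natDegree_sum_C_mul_X_pow_mul_one_sub_X_pow_le (hs : ∀ i ∈ s, i ≤ k) (a : ℕ → R) :
    (∑ i ∈ s, C (a i) * X ^ i * (1 - X) ^ (k - i)).natDegree ≤ k :=
  natDegree_sum_le_of_forall_le _ _ fun i hi ↦
    (natDegree_C_mul_X_pow_mul_one_sub_X_pow_le _ _ _).trans_eq (Nat.add_sub_cancel' (hs i hi))

lemma coeff_sum_C_mul_X_pow_mul_one_sub_X_pow (hs : ∀ i ∈ s, i ≤ k) (a : ℕ → R) :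
    (∑ i ∈ s, C (a i) * X ^ i * (1 - X) ^ (k - i)).coeff k = ∑ i ∈ s, (-1) ^ (k - i) * a i := by
  rw [finsetSum_coeff]
  exact sum_congr rfl fun i hi ↦ coeff_C_mul_X_pow_mul_one_sub_X_pow _ (hs i hi)

end OneSubX

theorem stmt_6_general (k n m : ℕ) :
    let g : Polynomial ℝ :=
      ∑ i ∈ range (min (m - n) k + 1),
        C ((-1 : ℝ) ^ i * ((n.factorial : ℝ) / ((n - k + i).factorial : ℝ)) *
            (((m - n).factorial : ℝ) / ((m - n - i).factorial : ℝ)) * (k.choose i : ℝ)) *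
          X ^ i * (1 - X) ^ (k - i)
    g.coeff k = (-1 : ℝ) ^ k *
        ∑ i ∈ range (min (m - n) k + 1),
          (k.choose i : ℝ) * ((n.factorial : ℝ) / ((n - k + i).factorial : ℝ)) *
            (((m - n).factorial : ℝ) / ((m - n - i).factorial : ℝ)) ∧
      g.coeff k ≠ 0 ∧ g.natDegree = k := by
  intro g
  have hs : ∀ i ∈ range (min (m - n) k + 1), i ≤ k := fun i hi ↦
    (Nat.lt_succ_iff.mp (mem_range.mp hi)).trans (min_le_right _ _)
  have hcoeff : g.coeff k = (-1 : ℝ) ^ k *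
      ∑ i ∈ range (min (m - n) k + 1),
        (k.choose i : ℝ) * ((n.factorial : ℝ) / ((n - k + i).factorial : ℝ)) *
          (((m - n).factorial : ℝ) / ((m - n - i).factorial : ℝ)) := by
    rw [coeff_sum_C_mul_X_pow_mul_one_sub_X_pow hs, mul_sum]
    refine sum_congr rfl fun i hi ↦ ?_
    rw [← Nat.sub_add_cancel (hs i hi), pow_add, Nat.add_sub_cancel]
    ring
  have hpos : 0 < ∑ i ∈ range (min (m - n) k + 1),
      (k.choose i : ℝ) * ((n.factorial : ℝ) / ((n - k + i).factorial : ℝ)) *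
        (((m - n).factorial : ℝ) / ((m - n - i).factorial : ℝ)) := by
    refine sum_pos (fun i hi ↦ ?_) nonempty_range_add_one
    have := Nat.choose_pos (hs i hi)
    positivity
  have hne : g.coeff k ≠ 0 := by
    rw [hcoeff]
    exact mul_ne_zero (pow_ne_zero _ (by norm_num)) hpos.ne'
  exact ⟨hcoeff, hne, (natDegree_sum_C_mul_X_pow_mul_one_sub_X_pow_le hs _).antisymm
    (le_natDegree_of_ne_zero hne)⟩

/-- For `1 ≤ k ≤ n` and `m ≥ n+1`, the polynomial
`g(x) = Σ_{i=0}^{min(m-n,k)} (-1)^i (n!/(n-k+i)!) ((m-n)!/(m-n-i)!) C(k,i) x^i (1-x)^{k-i}`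
has `x^k`-coefficient `(-1)^k Σ_{i=0}^{min(m-n,k)} C(k,i) (n!/(n-k+i)!) ((m-n)!/(m-n-i)!)`,
which is nonzero; hence `g` has degree exactly `k`. -/
theorem stmt_6 (k n m : ℕ) (hk : 1 ≤ k) (hkn : k ≤ n) (hm : n + 1 ≤ m) :
    let g : Polynomial ℝ :=
      ∑ i ∈ range (min (m - n) k + 1),
        C ((-1 : ℝ) ^ i * ((n.factorial : ℝ) / ((n - k + i).factorial : ℝ)) *
            (((m - n).factorial : ℝ) / ((m - n - i).factorial : ℝ)) * (k.choose i : ℝ)) *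
          X ^ i * (1 - X) ^ (k - i)
    g.coeff k = (-1 : ℝ) ^ k *
        ∑ i ∈ range (min (m - n) k + 1),
          (k.choose i : ℝ) * ((n.factorial : ℝ) / ((n - k + i).factorial : ℝ)) *
            (((m - n).factorial : ℝ) / ((m - n - i).factorial : ℝ)) ∧
      g.coeff k ≠ 0 ∧ g.natDegree = k :=
  stmt_6_general k n m
end

section
/- Let k, n, m be integers with 1 ≤ k ≤ n, m ≥ n + k, and k ≥ 2, and let g_∅(x) = Σ_{i=0}^{k} c_i C(k,i) x^i (1-x)^{k-i} with c_i = (-1)^i (n!/(n-k+i)!) ((m-n)!/(m-n-i)!) for 0 ≤ i ≤ min(m-n,k) and c_i = 0 otherwise. If λ_1 ≤ … ≤ λ_k ∈ (0,1) are the roots of g_∅, then Σ_{i=1}^k 1/λ_i = k·(m-k+1)/(n-k+1). -/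
/-!
Written in the Bernstein basis, `g_∅ = ∑ cᵢ B_{k,i}` has degree at most `k`; having `k` real roots
it splits, so its logarithmic derivative at `0` is `∑ 1 / (0 - λᵢ)`, i.e.
`∑ 1/λᵢ = -g_∅'(0) / g_∅(0)`. Only `B_{k,0}` and `B_{k,1}` contribute to the value and slope at
`0`, giving `g_∅(0) = c₀` and `g_∅'(0) = k (c₁ - c₀)`, and `c₁ / c₀ = -(m - n) / (n - k + 1)`.
-/

open Polynomial Finset

theorem Polynomial.Splits.sum_roots_inv {K : Type*} [Field K] {f : K[X]} (hf : f.Splits)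
    (h0 : f.eval 0 ≠ 0) : (f.roots.map (·⁻¹)).sum = -f.derivative.eval 0 / f.eval 0 := by
  rw [hf.eval_derivative_eq_eval_mul_sum h0, neg_div, mul_div_cancel_left₀ _ h0]
  simp [Multiset.sum_map_neg]

namespace bernsteinPolynomial

variable (R : Type*) [CommRing R]

theorem natDegree_le (n ν : ℕ) : (bernsteinPolynomial R n ν).natDegree ≤ n := by
  rcases le_or_gt ν n with h | h
  · unfold bernsteinPolynomial
    compute_degree
    omega
  · simp [eq_zero_of_lt R h]

theorem eval_zero_derivative (n ν : ℕ) :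
    (bernsteinPolynomial R n ν).derivative.eval 0 =
      if ν = 0 then -(n : R) else if ν = 1 then (n : R) else 0 := by
  rcases ν with _ | _ | ν
  · simp [derivative_zero, eval_at_0]
  · simp [derivative_succ, eval_at_0]
  · simp [derivative_succ, eval_at_0]

theorem C_mul_eq (a : R) (n ν : ℕ) :
    C a * bernsteinPolynomial R n ν = C (a * n.choose ν) * X ^ ν * (1 - X) ^ (n - ν) := by
  simp [bernsteinPolynomial, C_mul, mul_assoc]

end bernsteinPolynomial

section BernsteinSum

variable {R : Type*} [CommRing R]

noncomputable def bernsteinSum (k : ℕ) (c : ℕ → R) : R[X] :=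
  ∑ i ∈ range (k + 1), C (c i) * bernsteinPolynomial R k i

theorem natDegree_bernsteinSum_le (k : ℕ) (c : ℕ → R) : (bernsteinSum k c).natDegree ≤ k :=
  natDegree_sum_le_of_forall_le _ _ fun i _ =>
    natDegree_C_mul_le _ _ |>.trans (bernsteinPolynomial.natDegree_le R k i)

theorem eval_zero_bernsteinSum (k : ℕ) (c : ℕ → R) : (bernsteinSum k c).eval 0 = c 0 := by
  simp [bernsteinSum, eval_finsetSum, bernsteinPolynomial.eval_at_0]

theorem eval_zero_derivative_bernsteinSum (k : ℕ) (c : ℕ → R) :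
    (bernsteinSum k c).derivative.eval 0 = k * (c 1 - c 0) := by
  rcases k with _ | k
  · simp [bernsteinSum, bernsteinPolynomial.eval_zero_derivative]
  · simp only [bernsteinSum, sum_range_succ', zero_add, derivative_add, map_sum, derivative_mul,
      derivative_C, zero_mul, eval_add, eval_finsetSum, eval_mul, eval_C,
      bernsteinPolynomial.eval_zero_derivative, Nat.add_eq_zero_iff, one_ne_zero, and_false,
      and_self, ↓reduceIte, Nat.add_eq_right, mul_zero, sum_const_zero, Nat.cast_add, Nat.cast_one,
      neg_add_rev, mul_sub]
    ring

end BernsteinSum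

/-- The paper's `cᵢ`; only `i ≤ k ≤ m - n` will occur. -/
noncomputable def gEmptyCoeff (k n m i : ℕ) : ℝ :=
  (-1 : ℝ) ^ i * ((n.factorial : ℝ) / ((n - k + i).factorial : ℝ)) *
    (((m - n).factorial : ℝ) / ((m - n - i).factorial : ℝ))

theorem gEmptyCoeff_zero (k n m : ℕ) :
    gEmptyCoeff k n m 0 = (n.factorial : ℝ) / ((n - k).factorial : ℝ) := by
  have hne : ((m - n).factorial : ℝ) ≠ 0 := by positivity
  simp [gEmptyCoeff, hne]

theorem gEmptyCoeff_one {k n m : ℕ} (hkn : k ≤ n) (hnm : n < m) :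
    gEmptyCoeff k n m 1 = -(((m : ℝ) - n) / ((n : ℝ) - k + 1)) * gEmptyCoeff k n m 0 := by
  obtain ⟨d, rfl⟩ := Nat.exists_eq_add_of_le hkn
  obtain ⟨e, rfl⟩ := Nat.exists_eq_add_of_lt hnm
  rw [gEmptyCoeff_zero]
  simp only [gEmptyCoeff, show k + d - k = d by omega,
    show k + d + e + 1 - (k + d) = e + 1 by omega, Nat.add_sub_cancel, Nat.factorial_succ]
  push_cast
  field_simp
  ring

theorem stmt_8_general (k n m : ℕ) (hk1 : 1 ≤ k) (hkn : k ≤ n) (hm : n + k ≤ m)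
    (lam : Fin k → ℝ)
    (hroots :
      (∑ i ∈ range (min (m - n) k + 1),
          C ((-1 : ℝ) ^ i * ((n.factorial : ℝ) / ((n - k + i).factorial : ℝ)) *
              (((m - n).factorial : ℝ) / ((m - n - i).factorial : ℝ)) * (k.choose i : ℝ)) *
            X ^ i * (1 - X) ^ (k - i)).roots =
        Multiset.map lam Finset.univ.val) :
    ∑ i, (lam i)⁻¹ = k * ((m : ℝ) - k + 1) / ((n : ℝ) - k + 1) := by
  set g := bernsteinSum k (gEmptyCoeff k n m)
  have hg : g.roots = univ.val.map lam := by
    rw [← hroots, min_eq_right (by omega)]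
    simp only [g, bernsteinSum, bernsteinPolynomial.C_mul_eq, gEmptyCoeff]
  have hsplit : g.Splits := by
    refine splits_iff_card_roots.2 (le_antisymm (card_roots' g) ?_)
    simpa [hg] using natDegree_bernsteinSum_le k (gEmptyCoeff k n m)
  have hc0 : gEmptyCoeff k n m 0 ≠ 0 := by rw [gEmptyCoeff_zero]; positivity
  have hnk : (n : ℝ) - k + 1 ≠ 0 := by
    have : (k : ℝ) ≤ n := by exact_mod_cast hkn
    linarith
  have hsum := hsplit.sum_roots_inv (by rwa [eval_zero_bernsteinSum])
  rw [hg, Multiset.map_map, eval_zero_derivative_bernsteinSum, eval_zero_bernsteinSum,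
    gEmptyCoeff_one hkn (by omega)] at hsum
  rw [Finset.sum_eq_multiset_sum]
  refine hsum.trans ?_
  field_simp
  ring

/-- For `1 ≤ k ≤ n`, `m ≥ n+k`, `k ≥ 2`: if `λ₁ ≤ … ≤ λ_k ∈ (0,1)` are the roots of
`g_∅(x) = Σ_{i=0}^{k} c_i C(k,i) x^i (1-x)^{k-i}` with
`c_i = (-1)^i (n!/(n-k+i)!) ((m-n)!/(m-n-i)!)` for `0 ≤ i ≤ min(m-n,k)` (and `0` otherwise),
then `Σ 1/λᵢ = k(m-k+1)/(n-k+1)`. -/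
theorem stmt_8 (k n m : ℕ) (hk1 : 1 ≤ k) (hk2 : 2 ≤ k) (hkn : k ≤ n) (hm : n + k ≤ m)
    (lam : Fin k → ℝ) (hmono : Monotone lam) (h01 : ∀ i, lam i ∈ Set.Ioo (0 : ℝ) 1)
    (hroots :
      (∑ i ∈ range (min (m - n) k + 1),
          C ((-1 : ℝ) ^ i * ((n.factorial : ℝ) / ((n - k + i).factorial : ℝ)) *
              (((m - n).factorial : ℝ) / ((m - n - i).factorial : ℝ)) * (k.choose i : ℝ)) *
            X ^ i * (1 - X) ^ (k - i)).roots =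
        Multiset.map lam Finset.univ.val) :
    ∑ i, (lam i)⁻¹ = k * ((m : ℝ) - k + 1) / ((n : ℝ) - k + 1) :=
  stmt_8_general k n m hk1 hkn hm lam hroots
end

section
/- Let k, n, m be integers with 1 ≤ k ≤ n, m ≥ n + k, and k ≥ 2, and let g_∅ be as in the previous context with roots λ_1 ≤ … ≤ λ_k ∈ (0,1). Then Σ_{i=1}^k 1/(1-λ_i) = k·(m-k+1)/(m-n-k+1). -/
/-!
Since the `λᵢ` are all the roots of `g_∅`, the sum `Σ 1/(1-λᵢ)` is the logarithmic derivative
`g_∅'(1)/g_∅(1)`. At `x = 1` only the terms `i = k` and `i = k-1` of `g_∅` contribute, giving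
`g_∅(1) = c_k` and `g_∅'(1) = k(c_k - c_{k-1})`, and `c_{k-1}/c_k = -n/(m-n-k+1)`.
-/

open Polynomial Finset

section BernsteinForm

variable {R : Type*} [CommRing R]

noncomputable def bernsteinForm (k : ℕ) (b : ℕ → R) : R[X] :=
  ∑ i ∈ range (k + 1), C (b i) * X ^ i * (1 - X) ^ (k - i)

theorem natDegree_bernsteinForm_le (k : ℕ) (b : ℕ → R) : (bernsteinForm k b).natDegree ≤ k := by
  refine natDegree_sum_le_of_forall_le _ _ fun i hi => ?_
  have hi : i ≤ k := Nat.lt_succ_iff.mp (mem_range.mp hi)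
  calc (C (b i) * X ^ i * (1 - X) ^ (k - i)).natDegree
      ≤ i + (k - i) := by
        refine natDegree_mul_le_of_le (natDegree_C_mul_X_pow_le _ _) ?_
        have h : (1 - X : R[X]).natDegree ≤ 1 :=
          (natDegree_sub_le _ _).trans (by simp [natDegree_X_le])
        simpa using natDegree_pow_le_of_le (k - i) h
    _ = k := Nat.add_sub_cancel' hi

theorem eval_one_bernsteinForm (k : ℕ) (b : ℕ → R) : (bernsteinForm k b).eval 1 = b k := by
  rw [bernsteinForm, eval_finsetSum, sum_range_succ, sum_eq_zero fun i hi => ?_]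
  · simp
  · have : k - i ≠ 0 := Nat.sub_ne_zero_of_lt (mem_range.mp hi)
    simp [this]

theorem eval_one_derivative_bernsteinForm {k : ℕ} (hk : 1 ≤ k) (b : ℕ → R) :
    (derivative (bernsteinForm k b)).eval 1 = b k * k - b (k - 1) := by
  obtain ⟨j, rfl⟩ := Nat.exists_eq_add_of_le' hk
  rw [bernsteinForm, derivative_sum, eval_finsetSum, sum_range_succ, sum_range_succ,
    sum_eq_zero fun i hi => ?_]
  · simp [neg_add_eq_sub]
  · have : j + 1 - i - 1 ≠ 0 := by have := mem_range.mp hi; omega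
    have : j + 1 - i ≠ 0 := by omega
    simp [derivative_pow, *]

end BernsteinForm

theorem sum_inv_sub_roots_eq_eval_derivative_div_eval {F ι : Type*} [Field F] [Fintype ι]
    {p : F[X]} {r : ι → F} (hroots : p.roots = univ.val.map r)
    (hdeg : p.natDegree ≤ Fintype.card ι) {x : F} (hx : p.eval x ≠ 0) :
    ∑ i, (x - r i)⁻¹ = (derivative p).eval x / p.eval x := by
  have hcard : p.roots.card = Fintype.card ι := by simp [hroots]
  have hsplit : p.Splits := splits_iff_card_roots.mpr (le_antisymm (card_roots' p) (hcard ▸ hdeg))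
  rw [hsplit.eval_derivative_div_eval_of_ne_zero hx, hroots, Multiset.map_map]
  simp

/-- The weight `cᵢ C(k,i)` of `xⁱ (1-x)^(k-i)` in `g_∅`. -/
noncomputable def gCoeff (n m k i : ℕ) : ℝ :=
  (-1 : ℝ) ^ i * ((n.factorial : ℝ) / ((n - k + i).factorial : ℝ)) *
    (((m - n).factorial : ℝ) / ((m - n - i).factorial : ℝ)) * (k.choose i : ℝ)

section gCoeff

variable {n m k : ℕ}

theorem gCoeff_self (hkn : k ≤ n) :
    gCoeff n m k k = (-1 : ℝ) ^ k * ((m - n).factorial / (m - n - k).factorial) := by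
  simp [gCoeff, Nat.sub_add_cancel hkn, Nat.factorial_ne_zero]

theorem gCoeff_self_ne_zero (hkn : k ≤ n) : gCoeff n m k k ≠ 0 := by
  rw [gCoeff_self hkn]
  positivity

theorem gCoeff_pred (hk : 1 ≤ k) (hkn : k ≤ n) (hkm : k ≤ m - n) :
    gCoeff n m k (k - 1) * ((m - n - k : ℕ) + 1) = -(n * k) * gCoeff n m k k := by
  obtain ⟨j, rfl⟩ := Nat.exists_eq_add_of_le' hk
  obtain ⟨l, rfl⟩ := Nat.exists_eq_add_of_le' (hk.trans hkn)
  obtain ⟨d, hd⟩ := Nat.exists_eq_add_of_le' hkm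
  have hn : l + 1 - (j + 1) + j = l := by omega
  simp only [gCoeff, Nat.add_sub_cancel, hn, Nat.sub_add_cancel hkn, hd, Nat.factorial_succ,
    show d + (j + 1) - j = d + 1 by omega, Nat.choose_succ_self_right, Nat.choose_self]
  push_cast
  field_simp
  ring

theorem sub_gCoeff_pred_div_gCoeff_self (hk : 1 ≤ k) (hkn : k ≤ n) (hm : n + k ≤ m) :
    (gCoeff n m k k * k - gCoeff n m k (k - 1)) / gCoeff n m k k =
      k * ((m : ℝ) - k + 1) / ((m : ℝ) - n - k + 1) := by
  have hkm : k ≤ m - n := by omega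
  have hpred := gCoeff_pred hk hkn hkm
  have hcast : ((m - n - k : ℕ) : ℝ) = m - n - k := by
    rw [Nat.cast_sub hkm, Nat.cast_sub (by omega : n ≤ m)]
  rw [hcast] at hpred
  have hpos : (0 : ℝ) < m - n - k + 1 := by
    have : (n : ℝ) + k ≤ m := by exact_mod_cast hm
    linarith
  have hself := gCoeff_self_ne_zero (m := m) hkn
  rw [div_eq_div_iff hself hpos.ne']
  linear_combination -hpred

end gCoeff

theorem stmt_9_general (k n m : ℕ) (hk1 : 1 ≤ k) (hkn : k ≤ n) (hm : n + k ≤ m)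
    (lam : Fin k → ℝ)
    (hroots :
      (∑ i ∈ range (min (m - n) k + 1),
          C ((-1 : ℝ) ^ i * ((n.factorial : ℝ) / ((n - k + i).factorial : ℝ)) *
              (((m - n).factorial : ℝ) / ((m - n - i).factorial : ℝ)) * (k.choose i : ℝ)) *
            X ^ i * (1 - X) ^ (k - i)).roots =
        Multiset.map lam Finset.univ.val) :
    ∑ i, (1 - lam i)⁻¹ = k * ((m : ℝ) - k + 1) / ((m : ℝ) - n - k + 1) := by
  rw [min_eq_right (by omega : k ≤ m - n)] at hroots
  change (bernsteinForm k (gCoeff n m k)).roots = _ at hroots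
  have hval := eval_one_bernsteinForm k (gCoeff n m k)
  have hdeg : (bernsteinForm k (gCoeff n m k)).natDegree ≤ Fintype.card (Fin k) := by
    simpa using natDegree_bernsteinForm_le k (gCoeff n m k)
  rw [sum_inv_sub_roots_eq_eval_derivative_div_eval hroots hdeg
      (hval ▸ gCoeff_self_ne_zero hkn), hval, eval_one_derivative_bernsteinForm hk1,
    sub_gCoeff_pred_div_gCoeff_self hk1 hkn hm]

/-- For `1 ≤ k ≤ n`, `m ≥ n+k`, `k ≥ 2`: if `λ₁ ≤ … ≤ λ_k ∈ (0,1)` are the roots of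
`g_∅(x) = Σ_{i=0}^{k} c_i C(k,i) x^i (1-x)^{k-i}` with
`c_i = (-1)^i (n!/(n-k+i)!) ((m-n)!/(m-n-i)!)` for `0 ≤ i ≤ min(m-n,k)` (and `0` otherwise),
then `Σ 1/(1-λᵢ) = k(m-k+1)/(m-n-k+1)`. -/
theorem stmt_9 (k n m : ℕ) (hk1 : 1 ≤ k) (hk2 : 2 ≤ k) (hkn : k ≤ n) (hm : n + k ≤ m)
    (lam : Fin k → ℝ) (hmono : Monotone lam) (h01 : ∀ i, lam i ∈ Set.Ioo (0 : ℝ) 1)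
    (hroots :
      (∑ i ∈ range (min (m - n) k + 1),
          C ((-1 : ℝ) ^ i * ((n.factorial : ℝ) / ((n - k + i).factorial : ℝ)) *
              (((m - n).factorial : ℝ) / ((m - n - i).factorial : ℝ)) * (k.choose i : ℝ)) *
            X ^ i * (1 - X) ^ (k - i)).roots =
        Multiset.map lam Finset.univ.val) :
    ∑ i, (1 - lam i)⁻¹ = k * ((m : ℝ) - k + 1) / ((m : ℝ) - n - k + 1) :=
  stmt_9_general k n m hk1 hkn hm lam hroots
end

section
/- Let k, m, n be integers with 2 ≤ k ≤ n and m ≥ n + k, and suppose λ ∈ (0,1) satisfies the inequality 1/(k·(m-k+1)/(m-n-k+1) - 1 - (k-1)/(1-λ)) ≤ (k/(k-1))·(m-k+1)/(n-k+1) - (1/(k-1))·(1/λ) - 1, where additionally k·(m-k+1)/(m-n-k+1) - 1 - (k-1)/(1-λ) > 0. Then λ ≥ (n-k+1)/(α·k(m-n) + n-k+1), where α = 1/2 + (1/2)·√(1 - h_1(m,n,k)) and h_1(m,n,k) = 4·((k-1)/k²)·(1 - (k-1)(m-k+1)/((m-n)n)). -/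
/-!
Clearing the positive denominators turns the hypothesis into a quadratic inequality
`E λ² - B λ + C ≤ 0` with `E ≥ 0`, so `λ` lies to the right of the smaller root `2C / (B + √Δ)`.
The discriminant factors as `Δ = (n k (m - n))² (1 - h₁(m, n, k))`, and with this value of `√Δ`
the smaller root is exactly `(n - k + 1) / (α k (m - n) + n - k + 1)`.
-/

theorem two_mul_le_mul_add_of_quadratic_nonpos {a b c d x : ℝ} (ha : 0 ≤ a) (hx : 0 ≤ x)
    (hd : 0 ≤ d) (hdisc : d ^ 2 = b ^ 2 - 4 * a * c) (hq : a * x ^ 2 - b * x + c ≤ 0) :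
    2 * c ≤ x * (b + d) := by
  have hsq : (b - 2 * a * x) ^ 2 ≤ d ^ 2 := by nlinarith [mul_nonpos_of_nonneg_of_nonpos ha hq]
  have hle : b - 2 * a * x ≤ d := (abs_le_of_sq_le_sq' hsq hd).2
  nlinarith [mul_le_mul_of_nonneg_left hle hx]

noncomputable def h₁ (m n k : ℝ) : ℝ :=
  4 * ((k - 1) / k ^ 2) * (1 - (k - 1) * (m - k + 1) / ((m - n) * n))

section

variable {k n m lam : ℝ}

theorem one_sub_h₁_eq (hk : k ≠ 0) (hn : n ≠ 0) (hmn : m - n ≠ 0) :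
    1 - h₁ m n k = ((k - 2) ^ 2 * (m - n) ^ 2 * n + 4 * (k - 1) ^ 2 * (m - k + 1) * (m - n)) /
      (k ^ 2 * (m - n) ^ 2 * n) := by
  unfold h₁
  field_simp
  ring

theorem one_sub_h₁_nonneg (hk : 0 < k) (hn : 0 < n) (hmn : 0 < m - n) (hmk : 0 ≤ m - k + 1) :
    0 ≤ 1 - h₁ m n k := by
  rw [one_sub_h₁_eq hk.ne' hn.ne' hmn.ne']
  positivity

theorem discriminant_eq_sq_mul_one_sub_h₁ (hk : k ≠ 0) (hn : n ≠ 0) (hmn : m - n ≠ 0) :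
    (n * (k * (m - n) + 2 * (n - k + 1))) ^ 2
        - 4 * ((m - k + 1) * ((k - 1) * (m - n) + n)) * (n * (n - k + 1)) =
      (n * k * (m - n)) ^ 2 * (1 - h₁ m n k) := by
  rw [one_sub_h₁_eq hk hn hmn]
  field_simp
  ring

theorem quadratic_nonpos_of_one_div_le (hk : 1 < k) (hkn : 0 < n - k + 1)
    (hm : 0 < m - n - k + 1) (hlam : lam ∈ Set.Ioo (0 : ℝ) 1)
    (hpos : 0 < k * (m - k + 1) / (m - n - k + 1) - 1 - (k - 1) / (1 - lam))
    (hineq : 1 / (k * (m - k + 1) / (m - n - k + 1) - 1 - (k - 1) / (1 - lam)) ≤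
      (k / (k - 1)) * ((m - k + 1) / (n - k + 1)) - (1 / (k - 1)) * (1 / lam) - 1) :
    (m - k + 1) * ((k - 1) * (m - n) + n) * lam ^ 2
      - n * (k * (m - n) + 2 * (n - k + 1)) * lam + n * (n - k + 1) ≤ 0 := by
  obtain ⟨hl0, hl1⟩ := hlam
  set D := k * (m - k + 1) / (m - n - k + 1) - 1 - (k - 1) / (1 - lam)
  set R := (k / (k - 1)) * ((m - k + 1) / (n - k + 1)) - (1 / (k - 1)) * (1 / lam) - 1
  have hk1 : k - 1 ≠ 0 := by linarith
  have hl1ne : 1 - lam ≠ 0 := by linarith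
  have hRD : 1 ≤ R * D := (div_le_iff₀ hpos).mp hineq
  have hR : R * ((k - 1) * (n - k + 1) * lam) =
      k * (m - k + 1) * lam - (n - k + 1) - (k - 1) * (n - k + 1) * lam := by
    simp only [R]; field_simp
  have hD : D * ((m - n - k + 1) * (1 - lam)) =
      (k * (m - k + 1) - (m - n - k + 1)) * (1 - lam) - (k - 1) * (m - n - k + 1) := by
    simp only [D]; field_simp
  have hP : 0 ≤ ((k - 1) * (n - k + 1) * lam) * ((m - n - k + 1) * (1 - lam)) := by
    have : 0 < k - 1 := by linarith
    have : 0 < 1 - lam := by linarith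
    positivity
  have hcleared : ((k - 1) * (n - k + 1) * lam) * ((m - n - k + 1) * (1 - lam)) ≤
      (R * ((k - 1) * (n - k + 1) * lam)) * (D * ((m - n - k + 1) * (1 - lam))) := by
    linarith [mul_le_mul_of_nonneg_right hRD hP]
  rw [hR, hD] at hcleared
  refine nonpos_of_mul_nonpos_right (a := k) ?_ (by linarith)
  linarith

theorem div_le_of_quadratic_nonpos (hk : 1 ≤ k) (hkn : 0 < n - k + 1) (hmn : 0 < m - n)
    (hlam : 0 ≤ lam)
    (hq : (m - k + 1) * ((k - 1) * (m - n) + n) * lam ^ 2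
      - n * (k * (m - n) + 2 * (n - k + 1)) * lam + n * (n - k + 1) ≤ 0) :
    (n - k + 1) / ((1 / 2 + 1 / 2 * Real.sqrt (1 - h₁ m n k)) * (k * (m - n)) + (n - k + 1))
      ≤ lam := by
  have hk0 : 0 < k := by linarith
  have hn : 0 < n := by linarith
  have hkw : 0 < k * (m - n) := mul_pos hk0 hmn
  have hE : 0 ≤ (m - k + 1) * ((k - 1) * (m - n) + n) :=
    mul_nonneg (by linarith) (by nlinarith)
  set s := Real.sqrt (1 - h₁ m n k)
  have hs : 0 ≤ s := Real.sqrt_nonneg _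
  have hs2 : s ^ 2 = 1 - h₁ m n k :=
    Real.sq_sqrt (one_sub_h₁_nonneg hk0 hn hmn (by linarith))
  have hroot := two_mul_le_mul_add_of_quadratic_nonpos (d := n * (k * (m - n)) * s) hE hlam
    (by positivity)
    (by rw [mul_pow, hs2, ← mul_assoc, discriminant_eq_sq_mul_one_sub_h₁ hk0.ne' hn.ne' hmn.ne'])
    hq
  rw [div_le_iff₀ (by positivity)]
  nlinarith

end

/-- Quadratic-inequality step: for `2 ≤ k ≤ n`, `m ≥ n+k`, if `λ ∈ (0,1)` satisfies
`1/(k(m-k+1)/(m-n-k+1) - 1 - (k-1)/(1-λ)) ≤ (k/(k-1))(m-k+1)/(n-k+1) - (1/(k-1))(1/λ) - 1`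
with the denominator `k(m-k+1)/(m-n-k+1) - 1 - (k-1)/(1-λ)` positive, then
`λ ≥ (n-k+1)/(α k(m-n) + n-k+1)` with `α = 1/2 + (1/2)√(1 - h₁(m,n,k))` and
`h₁(m,n,k) = 4((k-1)/k²)(1 - (k-1)(m-k+1)/((m-n)n))`. -/
theorem stmt_10 (k n m : ℕ) (hk : 2 ≤ k) (hkn : k ≤ n) (hm : n + k ≤ m)
    (lam : ℝ) (hlam : lam ∈ Set.Ioo (0 : ℝ) 1)
    (hpos : 0 < (k : ℝ) * ((m : ℝ) - k + 1) / ((m : ℝ) - n - k + 1) - 1 -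
      ((k : ℝ) - 1) / (1 - lam))
    (hineq : 1 / ((k : ℝ) * ((m : ℝ) - k + 1) / ((m : ℝ) - n - k + 1) - 1 -
        ((k : ℝ) - 1) / (1 - lam)) ≤
      ((k : ℝ) / ((k : ℝ) - 1)) * (((m : ℝ) - k + 1) / ((n : ℝ) - k + 1)) -
        (1 / ((k : ℝ) - 1)) * (1 / lam) - 1) :
    lam ≥ ((n : ℝ) - k + 1) /
      ((1 / 2 + 1 / 2 * Real.sqrt (1 - 4 * (((k : ℝ) - 1) / (k : ℝ) ^ 2) *
          (1 - ((k : ℝ) - 1) * ((m : ℝ) - k + 1) / (((m : ℝ) - n) * n)))) *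
        (k * ((m : ℝ) - n)) + ((n : ℝ) - k + 1)) := by
  have hk' : (2 : ℝ) ≤ k := by exact_mod_cast hk
  have hkn' : (k : ℝ) ≤ n := by exact_mod_cast hkn
  have hm' : (n : ℝ) + k ≤ m := by exact_mod_cast hm
  have hq :=
    quadratic_nonpos_of_one_div_le (by linarith) (by linarith) (by linarith) hlam hpos hineq
  exact div_le_of_quadratic_nonpos (by linarith) (by linarith) (by linarith) hlam.1.le hq
end

section
/- Let A ∈ ℝ^{n×m} with A A^T = I_n, m > k ≥ 2, and n = 2. Then there exists S₀ ⊆ [m] with |S₀| = k such that σ_min(A_{S₀})² ≥ (k - √(k(m-k)/(m-1)))/m, where σ_min(A_{S₀}) = min_{‖x‖=1, x∈ℝ²} ‖(A_{S₀})^T x‖. -/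
/-!
Write `G_S = A_S A_Sᵀ` and, for `T` with `|T| ≤ k`, let
`p_T(x) = ∑_{S ⊇ T, |S| = k} det (x I - G_S)`.
Since `I - G_T` is the Gram matrix of the complement of `T`, averaging over the completions of `T`
gives the closed form `p_T(x) = C(N, q) [det ((x - α) I - (1 - α) G_T) + (β - α²) det (I - G_T)]`,
where `q = k - |T|`, `N = m - |T|`, `α = q / N` and `β = q (q - 1) / (N (N - 1))`.
At `T = ∅` this is `C(m, k) [(x - k/m)² - (α² - β)]`, whose smaller root is the bound `μ`.

The children `p_{T ∪ {i}}` are convex and all nonpositive at one common point `α' + (1 - α') a`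
(`α'`, `β'` being the parameters one level down), where `a` is the top eigenvalue of `G_T`: a rank-one update `G_T + g gᵀ` has eigenvalues on both
sides of `a`, and `β' ≤ α'²`. As their sum is a positive multiple of `p_T`, one of them stays
positive on `(-∞, μ)` whenever `p_T` does. Descending to `|T| = k` yields `S` with
`det (x I - G_S) > 0` for all `x < μ`, that is `σ_min(A_S)² = λ_min(G_S) ≥ μ`.
-/

open Matrix

/-- `σ_min(M)` : the minimum over unit vectors `x ∈ ℝ²` of `‖Mᵀ x‖`. -/
noncomputable def sigmaMin2 {α : Type*} [Fintype α] (M : Matrix (Fin 2) α ℝ) : ℝ :=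
  sInf {r : ℝ | ∃ x : EuclideanSpace ℝ (Fin 2), ‖x‖ = 1 ∧
    r = ‖(WithLp.equiv 2 (α → ℝ)).symm (Mᵀ.mulVec ((WithLp.equiv 2 (Fin 2 → ℝ)) x))‖}

open Finset

namespace Finset

variable {ι M : Type*} [DecidableEq ι]

theorem sum_filter_powersetCard_subset [AddCommMonoid M] {s t : Finset ι} {n : ℕ}
    (hst : s ⊆ t) (hsn : #s ≤ n) (f : Finset ι → M) :
    ∑ R ∈ (t.powersetCard n).filter (s ⊆ ·), f R =
      ∑ R ∈ (t \ s).powersetCard (n - #s), f (R ∪ s) := by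
  rw [filter_powersetCard_subset s t n hst hsn, sum_image]
  intro a ha b hb hab
  simp only at hab
  have hdisj : ∀ R ∈ ((t \ s).powersetCard (n - #s) : Set (Finset ι)), Disjoint R s :=
    fun R hR => disjoint_of_subset_left (mem_powersetCard.mp hR).1 disjoint_sdiff_self_left
  rw [← union_sdiff_cancel_right (hdisj a ha), hab, union_sdiff_cancel_right (hdisj b hb)]

theorem cast_card_filter_powersetCard_subset {s t : Finset ι} (hst : s ⊆ t) (n : ℕ) :
    (#((t.powersetCard n).filter (s ⊆ ·)) : ℝ) =
      (#t).choose n * n.choose #s / (#t).choose #s := by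
  have hpos : 0 < (#t).choose #s := Nat.choose_pos (card_le_card hst)
  rw [eq_div_iff (by positivity)]
  norm_cast
  by_cases hsn : #s ≤ n
  · rw [card_filter_powersetCard_subset s t n hst hsn, Nat.choose_mul hsn]
    ring
  · push Not at hsn
    rw [Nat.choose_eq_zero_of_lt hsn, mul_zero, mul_eq_zero, card_eq_zero]
    left
    refine filter_false_of_mem fun R hR hsR => ?_
    exact (card_le_card hsR).not_gt ((mem_powersetCard.mp hR).2 ▸ hsn)

theorem sum_sum_mem_eq_sum_sum_filter_mem [AddCommMonoid M] {P : Finset (Finset ι)}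
    {t : Finset ι} (hP : ∀ R ∈ P, R ⊆ t) (F : Finset ι → ι → M) :
    ∑ R ∈ P, ∑ l ∈ R, F R l = ∑ l ∈ t, ∑ R ∈ P.filter (l ∈ ·), F R l :=
  sum_comm' fun R l => by
    simp only [mem_filter]
    exact ⟨fun h => ⟨h, hP R h.1 h.2⟩, fun h => h.1⟩

variable [AddCommMonoid M] [Module ℝ M]

theorem sum_powersetCard_sum (t : Finset ι) (n : ℕ) (f : ι → M) :
    ∑ R ∈ t.powersetCard n, ∑ l ∈ R, f l =
      ((n / #t : ℝ) * (#t).choose n) • ∑ l ∈ t, f l := by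
  rw [sum_sum_mem_eq_sum_sum_filter_mem (fun R hR => (mem_powersetCard.mp hR).1), smul_sum]
  refine sum_congr rfl fun l hl => ?_
  have hcard := cast_card_filter_powersetCard_subset (singleton_subset_iff.mpr hl) n
  simp only [singleton_subset_iff, card_singleton, Nat.choose_one_right] at hcard
  rw [sum_const, ← Nat.cast_smul_eq_nsmul ℝ, hcard]
  ring_nf

theorem sum_powersetCard_sum_sum (t : Finset ι) (n : ℕ) (h : ι → ι → M)
    (hh : ∀ l, h l l = 0) :
    ∑ R ∈ t.powersetCard n, ∑ l ∈ R, ∑ l' ∈ R, h l l' =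
      ((n * (n - 1) / (#t * (#t - 1)) : ℝ) * (#t).choose n) • ∑ l ∈ t, ∑ l' ∈ t, h l l' := by
  have hsub : ∀ R ∈ t.powersetCard n, R ⊆ t := fun R hR => (mem_powersetCard.mp hR).1
  rw [sum_sum_mem_eq_sum_sum_filter_mem hsub, smul_sum]
  refine sum_congr rfl fun l hl => ?_
  rw [sum_sum_mem_eq_sum_sum_filter_mem (fun R hR => hsub R (mem_filter.mp hR).1), smul_sum]
  refine sum_congr rfl fun l' hl' => ?_
  obtain rfl | hne := eq_or_ne l l'
  · simp [hh]
  have hcard := cast_card_filter_powersetCard_subset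
    (insert_subset hl (singleton_subset_iff.mpr hl')) n
  rw [card_pair hne, Nat.cast_choose_two, Nat.cast_choose_two, mul_div_assoc,
    div_div_div_cancel_right₀ two_ne_zero] at hcard
  rw [filter_filter, sum_const, ← Nat.cast_smul_eq_nsmul ℝ]
  simp only [insert_subset_iff, singleton_subset_iff] at hcard
  rw [hcard, mul_comm]

end Finset

theorem Matrix.det_sub_fin_two {R : Type*} [CommRing R] (X Y : Matrix (Fin 2) (Fin 2) R) :
    (X - Y).det = X.det - (adjugate X * Y).trace + Y.det := by
  simp only [det_fin_two, adjugate_fin_two, trace_fin_two, mul_apply, Fin.sum_univ_two,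
    Matrix.sub_apply, of_apply, cons_val', cons_val_zero, cons_val_one, empty_val',
    cons_val_fin_one]
  ring

theorem Matrix.det_smul_one_sub_fin_two {R : Type*} [CommRing R] (x : R)
    (G : Matrix (Fin 2) (Fin 2) R) :
    (x • (1 : Matrix (Fin 2) (Fin 2) R) - G).det = (x - G 0 0) * (x - G 1 1) - G 0 1 * G 1 0 := by
  simp [det_fin_two]

theorem convexOn_det_smul_one_sub (G : Matrix (Fin 2) (Fin 2) ℝ) :
    ConvexOn ℝ Set.univ fun x : ℝ => (x • (1 : Matrix (Fin 2) (Fin 2) ℝ) - G).det := by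
  have hquad : (fun x : ℝ => (x • (1 : Matrix (Fin 2) (Fin 2) ℝ) - G).det) =
      fun x => x ^ 2 + (-G.trace * x + G.det) := by
    ext x
    rw [det_smul_one_sub_fin_two, trace_fin_two, det_fin_two]
    ring
  rw [hquad]
  exact (Even.convexOn_pow even_two).add
    (((LinearMap.mulLeft ℝ (-G.trace)).convexOn convex_univ).add_const _)

theorem exists_det_smul_one_sub_add_vecMulVec_nonpos {G : Matrix (Fin 2) (Fin 2) ℝ}
    (hG : G.IsSymm) : ∃ a : ℝ, ∀ g : Fin 2 → ℝ, (a • 1 - (G + vecMulVec g g)).det ≤ 0 := by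
  set D := √((G 0 0 - G 1 1) ^ 2 + 4 * G 0 1 ^ 2)
  have hD : D ^ 2 = (G 0 0 - G 1 1) ^ 2 + 4 * G 0 1 ^ 2 := Real.sq_sqrt (by positivity)
  refine ⟨(G 0 0 + G 1 1 + D) / 2, fun g => ?_⟩
  -- `a` is the top eigenvalue of `G`: the diagonal `p, r` of `a • 1 - G` is nonnegative and
  -- `p * r = G 0 1 ^ 2`, so `a • 1 - G` is positive semidefinite and singular
  set p := (G 1 1 - G 0 0 + D) / 2 with hpdef
  set r := (G 0 0 - G 1 1 + D) / 2 with hrdef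
  have hpr : p * r = G 0 1 ^ 2 := by linear_combination hD / 4
  have habs : |G 0 0 - G 1 1| ≤ D := Real.abs_le_sqrt (by nlinarith [sq_nonneg (G 0 1)])
  have hp : 0 ≤ p := by linarith [le_abs_self (G 0 0 - G 1 1)]
  have hr : 0 ≤ r := by linarith [neg_abs_le (G 0 0 - G 1 1)]
  have hform : 0 ≤ p * g 1 ^ 2 + 2 * G 0 1 * (g 0 * g 1) + r * g 0 ^ 2 := by
    have hsum : (p + r) * (p * g 1 ^ 2 + 2 * G 0 1 * (g 0 * g 1) + r * g 0 ^ 2) =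
        (p * g 1 + G 0 1 * g 0) ^ 2 + (r * g 0 + G 0 1 * g 1) ^ 2 := by
      linear_combination (g 0 ^ 2 + g 1 ^ 2) * hpr
    rcases (add_nonneg hp hr).eq_or_lt with h0 | hpos
    · have hp0 : p = 0 := by linarith
      have hr0 : r = 0 := by linarith
      have hG01 : G 0 1 = 0 := by nlinarith
      rw [hp0, hr0, hG01]
      simp
    · nlinarith [sq_nonneg (p * g 1 + G 0 1 * g 0), sq_nonneg (r * g 0 + G 0 1 * g 1)]
  rw [det_smul_one_sub_fin_two]
  simp only [Matrix.add_apply, vecMulVec_apply, hG.apply 0 1]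
  rw [hpdef, hrdef] at hform hpr
  nlinarith [hform, hpr]

theorem le_dotProduct_mulVec_of_forall_lt_det_pos {G : Matrix (Fin 2) (Fin 2) ℝ} (hG : G.IsSymm)
    {μ : ℝ} (h : ∀ x < μ, 0 < (x • (1 : Matrix (Fin 2) (Fin 2) ℝ) - G).det) {v : Fin 2 → ℝ}
    (hv : v ⬝ᵥ v = 1) : μ ≤ v ⬝ᵥ G *ᵥ v := by
  by_contra! hlt
  set q := v ⬝ᵥ G *ᵥ v with hq
  have hq' : q = G 0 0 * v 0 ^ 2 + 2 * G 0 1 * (v 0 * v 1) + G 1 1 * v 1 ^ 2 := by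
    simp only [hq, dotProduct, mulVec, Fin.sum_univ_two, hG.apply 0 1]
    ring
  have hv' : v 0 ^ 2 + v 1 ^ 2 = 1 := by simpa [dotProduct, Fin.sum_univ_two, sq] using hv
  have hdet := h q hlt
  rw [det_smul_one_sub_fin_two, hG.apply 0 1] at hdet
  -- `v` would be an isotropic unit vector of the definite form `G - q • 1`
  have hiso : (G 0 0 - q + (G 1 1 - q)) *
      ((G 0 0 - q) * v 0 ^ 2 + 2 * G 0 1 * (v 0 * v 1) + (G 1 1 - q) * v 1 ^ 2) =
      ((G 0 0 - q) * v 0 + G 0 1 * v 1) ^ 2 + ((G 1 1 - q) * v 1 + G 0 1 * v 0) ^ 2 +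
        ((G 0 0 - q) * (G 1 1 - q) - G 0 1 ^ 2) * (v 0 ^ 2 + v 1 ^ 2) := by ring
  have hzero : (G 0 0 - q) * v 0 ^ 2 + 2 * G 0 1 * (v 0 * v 1) + (G 1 1 - q) * v 1 ^ 2 = 0 := by
    linear_combination -hq' - q * hv'
  rw [hzero, mul_zero, hv'] at hiso
  nlinarith [sq_nonneg ((G 0 0 - q) * v 0 + G 0 1 * v 1),
    sq_nonneg ((G 1 1 - q) * v 1 + G 0 1 * v 0)]

theorem le_sq_sigmaMin2 {α : Type*} [Fintype α] (M : Matrix (Fin 2) α ℝ) {μ : ℝ}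
    (h : ∀ v : Fin 2 → ℝ, v ⬝ᵥ v = 1 → μ ≤ v ⬝ᵥ (M * Mᵀ) *ᵥ v) : μ ≤ sigmaMin2 M ^ 2 := by
  set R := {r : ℝ | ∃ x : EuclideanSpace ℝ (Fin 2), ‖x‖ = 1 ∧
    r = ‖(WithLp.equiv 2 (α → ℝ)).symm (Mᵀ.mulVec ((WithLp.equiv 2 (Fin 2 → ℝ)) x))‖}
  have hbound : ∀ r ∈ R, √μ ≤ r := by
    rintro r ⟨x, hx, rfl⟩
    rw [Real.sqrt_le_left (norm_nonneg _), EuclideanSpace.real_norm_sq_eq]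
    have hunit : x.ofLp ⬝ᵥ x.ofLp = 1 := by
      simpa [dotProduct, sq, hx] using (EuclideanSpace.real_norm_sq_eq x).symm
    have hquad : x.ofLp ⬝ᵥ (M * Mᵀ) *ᵥ x.ofLp = (Mᵀ *ᵥ x.ofLp) ⬝ᵥ (Mᵀ *ᵥ x.ofLp) := by
      rw [← mulVec_mulVec, dotProduct_mulVec, ← mulVec_transpose]
    have := h _ hunit
    rw [hquad] at this
    simpa [dotProduct, sq] using this
  have hle : √μ ≤ sigmaMin2 M := le_csInf ⟨_, EuclideanSpace.single 0 1, by simp, rfl⟩ hbound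
  exact (Real.sqrt_le_left ((Real.sqrt_nonneg μ).trans hle)).mp hle

theorem exists_forall_lt_pos_of_convexOn {κ : Type*} {U : Finset κ} (hU : U.Nonempty)
    {p : κ → ℝ → ℝ} (hp : ∀ i ∈ U, ConvexOn ℝ Set.univ (p i)) {w μ : ℝ}
    (hw : ∀ i ∈ U, p i w ≤ 0) (hsum : ∀ x < μ, 0 < ∑ i ∈ U, p i x) :
    ∃ i ∈ U, ∀ x < μ, 0 < p i x := by
  by_contra! h
  choose! x hxμ hx using h
  have hzμ : U.sup' hU x < μ := (sup'_lt_iff hU).2 hxμ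
  have hμw : μ ≤ w := by
    by_contra! hwμ
    exact (hsum w hwμ).not_ge (sum_nonpos hw)
  have hz : ∀ i ∈ U, p i (U.sup' hU x) ≤ 0 := fun i hi =>
    ((hp i hi).le_max_of_mem_Icc trivial trivial ⟨le_sup' x hi, hzμ.le.trans hμw⟩).trans
      (max_le (hx i hi) (hw i hi))
  exact (hsum _ hzμ).not_ge (sum_nonpos hz)

theorem mul_sub_one_div_mul_sub_one_le_div_sq {q N : ℕ} (hqN : q ≤ N) :
    (q * (q - 1) / (N * (N - 1)) : ℝ) ≤ ((q : ℝ) / N) ^ 2 := by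
  rcases Nat.lt_or_ge N 2 with hN | hN
  · interval_cases N <;> simp
  have hN' : (2 : ℝ) ≤ N := by exact_mod_cast hN
  have hqN' : (q : ℝ) ≤ N := by exact_mod_cast hqN
  rw [div_pow, div_le_div_iff₀ (by nlinarith) (by positivity)]
  nlinarith [mul_nonneg (mul_nonneg (Nat.cast_nonneg q) (Nat.cast_nonneg N)) (sub_nonneg.2 hqN')]

variable {ι n : Type*}

/-- `A_S A_Sᵀ`. -/
noncomputable def gramOn (A : Matrix n ι ℝ) (S : Finset ι) : Matrix n n ℝ :=
  ∑ l ∈ S, vecMulVec (Aᵀ l) (Aᵀ l)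

section gramOn

variable (A : Matrix n ι ℝ)

theorem gramOn_empty : gramOn A ∅ = 0 := sum_empty

theorem gramOn_union [DecidableEq ι] {S R : Finset ι} (h : Disjoint S R) :
    gramOn A (S ∪ R) = gramOn A S + gramOn A R :=
  sum_union h

theorem gramOn_insert [DecidableEq ι] {i : ι} {S : Finset ι} (hi : i ∉ S) :
    gramOn A (insert i S) = gramOn A S + vecMulVec (Aᵀ i) (Aᵀ i) := by
  rw [gramOn, sum_insert hi, add_comm, gramOn]

theorem isSymm_gramOn (S : Finset ι) : (gramOn A S).IsSymm := by
  ext i j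
  simp only [gramOn, transpose_apply, Matrix.sum_apply, vecMulVec_apply, mul_comm]

theorem posSemidef_gramOn [Fintype n] (S : Finset ι) : (gramOn A S).PosSemidef :=
  posSemidef_sum S fun l _ => by simpa using posSemidef_vecMulVec_self_star (Aᵀ l)

theorem gramOn_compl [Fintype ι] [DecidableEq ι] [Fintype n] [DecidableEq n] (hA : A * Aᵀ = 1)
    (S : Finset ι) : gramOn A Sᶜ = 1 - gramOn A S := by
  have huniv : gramOn A univ = 1 := by
    rw [← hA]
    ext i j
    simp [gramOn, Matrix.sum_apply, vecMulVec_apply, mul_apply]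
  rw [← huniv, ← union_compl S, gramOn_union A disjoint_compl_right, add_sub_cancel_left]

theorem submatrix_mul_transpose_eq_gramOn (S : Finset ι) :
    A.submatrix id ((↑) : S → ι) * (A.submatrix id ((↑) : S → ι))ᵀ = gramOn A S := by
  ext i j
  simp only [mul_apply, submatrix_apply, transpose_apply, id, gramOn, Matrix.sum_apply,
    vecMulVec_apply]
  exact sum_coe_sort S fun l => A i l * A j l

end gramOn

theorem det_gramOn (A : Matrix (Fin 2) ι ℝ) (S : Finset ι) :
    (gramOn A S).det =
      ∑ l ∈ S, ∑ l' ∈ S, (A 0 l ^ 2 * A 1 l' ^ 2 - A 0 l * A 1 l * (A 0 l' * A 1 l')) := by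
  simp only [det_fin_two, gramOn, Matrix.sum_apply, vecMulVec_apply, transpose_apply,
    sum_mul_sum, ← sum_sub_distrib]
  ring_nf

variable [Fintype ι] [DecidableEq ι]

/-- `p_T(x)`. -/
noncomputable def charSum (A : Matrix (Fin 2) ι ℝ) (k : ℕ) (T : Finset ι) (x : ℝ) : ℝ :=
  ∑ S ∈ (univ.powersetCard k).filter (T ⊆ ·),
    (x • (1 : Matrix (Fin 2) (Fin 2) ℝ) - gramOn A S).det

section charSum

variable (A : Matrix (Fin 2) ι ℝ) (k : ℕ)

theorem convexOn_charSum (T : Finset ι) : ConvexOn ℝ Set.univ (charSum A k T) := by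
  have : charSum A k T = ∑ S ∈ (univ.powersetCard k).filter (T ⊆ ·),
      fun x : ℝ => (x • (1 : Matrix (Fin 2) (Fin 2) ℝ) - gramOn A S).det := by
    ext x
    simp [charSum, Finset.sum_apply]
  rw [this]
  exact sum_induction _ (ConvexOn ℝ Set.univ) (fun _ _ => ConvexOn.add)
    (convexOn_const 0 convex_univ) fun S _ => convexOn_det_smul_one_sub _

theorem charSum_of_card_eq {T : Finset ι} (hT : #T = k) (x : ℝ) :
    charSum A k T x = (x • (1 : Matrix (Fin 2) (Fin 2) ℝ) - gramOn A T).det := by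
  have : (univ.powersetCard k).filter (T ⊆ ·) = {T} := by
    ext S
    simp only [mem_filter, mem_powersetCard, subset_univ, true_and, mem_singleton]
    exact ⟨fun ⟨hS, hTS⟩ => (eq_of_subset_of_card_le hTS (hS ▸ hT.ge)).symm,
      fun h => ⟨h ▸ hT, h ▸ subset_rfl⟩⟩
  rw [charSum, this, sum_singleton]

theorem sum_compl_charSum_insert (T : Finset ι) (x : ℝ) :
    ∑ i ∈ Tᶜ, charSum A k (insert i T) x = (k - #T : ℕ) * charSum A k T x := by
  have hswap : ∑ i ∈ Tᶜ, charSum A k (insert i T) x =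
      ∑ S ∈ (univ.powersetCard k).filter (T ⊆ ·), ∑ i ∈ S \ T,
        (x • (1 : Matrix (Fin 2) (Fin 2) ℝ) - gramOn A S).det := by
    refine sum_comm' fun i S => ?_
    simp only [mem_filter, mem_powersetCard, subset_univ, true_and, insert_subset_iff, mem_sdiff,
      mem_compl]
    tauto
  rw [charSum, hswap, mul_sum]
  refine sum_congr rfl fun S hS => ?_
  simp only [mem_filter, mem_powersetCard, subset_univ, true_and] at hS
  rw [sum_const, card_sdiff_of_subset hS.2, hS.1, nsmul_eq_mul]

/-- `α = q / N` and `β = q (q - 1) / (N (N - 1))` are the probabilities that one, resp. two given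
elements of `Tᶜ` lie in a uniformly random `q`-subset of `Tᶜ`. -/
theorem charSum_eq (hA : A * Aᵀ = 1) {T : Finset ι} {q N : ℕ} (hq : #T + q = k)
    (hN : #T + N = Fintype.card ι) (x : ℝ) :
    charSum A k T x = N.choose q *
      (((x - q / N) • (1 : Matrix (Fin 2) (Fin 2) ℝ) - (1 - (q : ℝ) / N) • gramOn A T).det +
        (q * (q - 1) / (N * (N - 1)) - (q / N) ^ 2) * (1 - gramOn A T).det) := by
  set G := gramOn A T
  set X := x • (1 : Matrix (Fin 2) (Fin 2) ℝ) - G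
  set α : ℝ := q / N
  set β : ℝ := q * (q - 1) / (N * (N - 1))
  have hcard : #Tᶜ = N := by rw [card_compl]; omega
  have hreindex : charSum A k T x = ∑ R ∈ Tᶜ.powersetCard q, (X - gramOn A R).det := by
    rw [charSum, sum_filter_powersetCard_subset (subset_univ T) (by omega),
      show k - #T = q by omega, ← compl_eq_univ_sdiff]
    refine sum_congr rfl fun R hR => ?_
    have hdisj : Disjoint R T :=
      disjoint_of_subset_left (mem_powersetCard.mp hR).1 disjoint_compl_left
    rw [gramOn_union A hdisj, sub_add_eq_sub_sub_swap]
  have hlin : ∑ R ∈ Tᶜ.powersetCard q, gramOn A R = (α * N.choose q) • (1 - G) := by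
    simp only [gramOn]
    rw [sum_powersetCard_sum, hcard, ← gramOn, gramOn_compl A hA]
  have hquad : ∑ R ∈ Tᶜ.powersetCard q, (gramOn A R).det = β * N.choose q * (1 - G).det := by
    simp only [det_gramOn]
    rw [sum_powersetCard_sum_sum _ _ _ (fun l => by ring), hcard, ← det_gramOn,
      gramOn_compl A hA, smul_eq_mul]
  have hshift : X - α • (1 - G) = (x - α) • (1 : Matrix (Fin 2) (Fin 2) ℝ) - (1 - α) • G := by
    simp only [X]
    module
  have hexpand := det_sub_fin_two X (α • (1 - G))
  rw [hshift, det_smul, mul_smul_comm, trace_smul, Fintype.card_fin, smul_eq_mul] at hexpand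
  rw [hreindex, hexpand]
  simp only [det_sub_fin_two, sum_add_distrib, sum_sub_distrib, sum_const, card_powersetCard,
    hcard, nsmul_eq_mul, ← trace_sum, ← mul_sum, hlin, hquad, mul_smul_comm, trace_smul,
    smul_eq_mul]
  ring

theorem charSum_insert_nonpos (hA : A * Aᵀ = 1) (hk : k ≤ Fintype.card ι) {T : Finset ι}
    {q N : ℕ} (hq : #T + 1 + q = k) (hN : #T + 1 + N = Fintype.card ι) {a : ℝ}
    (ha : ∀ g, (a • (1 : Matrix (Fin 2) (Fin 2) ℝ) - (gramOn A T + vecMulVec g g)).det ≤ 0)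
    {i : ι} (hi : i ∉ T) :
    charSum A k (insert i T) (q / N + (1 - q / N) * a) ≤ 0 := by
  have hcard : #(insert i T) = #T + 1 := card_insert_of_notMem hi
  have hcompl : 0 ≤ (1 - gramOn A (insert i T)).det := by
    rw [← gramOn_compl A hA]
    exact (posSemidef_gramOn A _).det_nonneg
  have hshift : (q / N + (1 - q / N) * a - q / N) • (1 : Matrix (Fin 2) (Fin 2) ℝ) -
      (1 - (q : ℝ) / N) • gramOn A (insert i T) =
      (1 - (q : ℝ) / N) • (a • 1 - gramOn A (insert i T)) := by
    module
  have hβ : (q * (q - 1) / (N * (N - 1)) - ((q : ℝ) / N) ^ 2) ≤ 0 :=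
    sub_nonpos.2 (mul_sub_one_div_mul_sub_one_le_div_sq (by omega))
  rw [charSum_eq A k hA (hcard ▸ hq) (hcard ▸ hN), hshift, det_smul, Fintype.card_fin,
    gramOn_insert A hi]
  rw [gramOn_insert A hi] at hcompl
  exact mul_nonpos_of_nonneg_of_nonpos (by positivity)
    (add_nonpos (mul_nonpos_of_nonneg_of_nonpos (sq_nonneg _) (ha (Aᵀ i)))
      (mul_nonpos_of_nonpos_of_nonneg hβ hcompl))

theorem exists_forall_lt_charSum_insert_pos (hA : A * Aᵀ = 1) (hk : k ≤ Fintype.card ι)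
    {T : Finset ι} (hT : #T < k) {μ : ℝ} (hpos : ∀ x < μ, 0 < charSum A k T x) :
    ∃ i ∉ T, ∀ x < μ, 0 < charSum A k (insert i T) x := by
  obtain ⟨a, ha⟩ := exists_det_smul_one_sub_add_vecMulVec_nonpos (isSymm_gramOn A T)
  have hU : Tᶜ.Nonempty := by
    rw [← card_pos, card_compl]
    omega
  obtain ⟨i, hi, hpos'⟩ := exists_forall_lt_pos_of_convexOn hU
    (fun i _ => convexOn_charSum A k (insert i T))
    (fun i hi => charSum_insert_nonpos A k hA hk (q := k - #T - 1)
      (N := Fintype.card ι - #T - 1) (by omega) (by omega) ha (mem_compl.mp hi))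
    fun x hx => by
      rw [sum_compl_charSum_insert]
      exact mul_pos (by exact_mod_cast Nat.sub_pos_of_lt hT) (hpos x hx)
  exact ⟨i, mem_compl.mp hi, hpos'⟩

theorem exists_card_eq_forall_lt_det_pos (hA : A * Aᵀ = 1) (hk : k ≤ Fintype.card ι) {μ : ℝ}
    (T : Finset ι) (hT : #T ≤ k) (hpos : ∀ x < μ, 0 < charSum A k T x) :
    ∃ S : Finset ι, #S = k ∧
      ∀ x < μ, 0 < (x • (1 : Matrix (Fin 2) (Fin 2) ℝ) - gramOn A S).det := by
  induction hd : k - #T generalizing T with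
  | zero =>
    have hTk : #T = k := by omega
    exact ⟨T, hTk, fun x hx => charSum_of_card_eq A k hTk x ▸ hpos x hx⟩
  | succ d ih =>
    obtain ⟨i, hi, hpos'⟩ := exists_forall_lt_charSum_insert_pos A k hA hk (by omega : #T < k) hpos
    have hcard : #(insert i T) = #T + 1 := card_insert_of_notMem hi
    exact ih (insert i T) (by omega) hpos' (by omega)

theorem forall_lt_charSum_empty_pos (hA : A * Aᵀ = 1) {m : ℕ} (hm : Fintype.card ι = m)
    (hkm : k < m) : ∀ x < ((k : ℝ) - √(k * (m - k) / (m - 1))) / m, 0 < charSum A k ∅ x := by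
  intro x hx
  have hkm' : (k : ℝ) + 1 ≤ m := by exact_mod_cast hkm
  have hW : 0 ≤ (k * (m - k) / (m - 1) : ℝ) :=
    div_nonneg (mul_nonneg k.cast_nonneg (by linarith)) (by linarith [k.cast_nonneg (α := ℝ)])
  set s := √(k * (m - k) / (m - 1) : ℝ) / m
  -- `k / m ± s` are the roots of `charSum A k ∅`
  have hs : s ^ 2 = ((k : ℝ) / m) ^ 2 - k * (k - 1) / (m * (m - 1)) := by
    rw [div_pow, Real.sq_sqrt hW]
    rcases Nat.lt_or_ge m 2 with hm2 | hm2
    · obtain rfl : m = 1 := by omega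
      obtain rfl : k = 0 := by omega
      simp
    have hm1 : (m : ℝ) - 1 ≠ 0 := by
      have : (2 : ℝ) ≤ m := by exact_mod_cast hm2
      linarith
    field_simp
    ring
  have hs0 : 0 ≤ s := div_nonneg (Real.sqrt_nonneg _) (by linarith [k.cast_nonneg (α := ℝ)])
  rw [sub_div] at hx
  rw [charSum_eq A k hA (T := ∅) (q := k) (N := m) (by simp) (by simp [hm])]
  simp only [gramOn_empty, smul_zero, sub_zero, det_smul, det_one, Fintype.card_fin, mul_one]
  refine mul_pos (by exact_mod_cast Nat.choose_pos hkm.le) ?_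
  nlinarith

end charSum

theorem stmt_14_general (m k : ℕ) (hkm : k < m)
    (A : Matrix (Fin 2) (Fin m) ℝ) (hA : A * Aᵀ = 1) :
    ∃ S : Finset (Fin m), S.card = k ∧
      sigmaMin2 (A.submatrix id (fun j : S => (j : Fin m))) ^ 2 ≥
        ((k : ℝ) - Real.sqrt ((k : ℝ) * ((m : ℝ) - k) / ((m : ℝ) - 1))) / m := by
  obtain ⟨S, hS, hdet⟩ := exists_card_eq_forall_lt_det_pos A k hA (by simpa using hkm.le) ∅
    (Nat.zero_le k) (forall_lt_charSum_empty_pos A k hA (Fintype.card_fin m) hkm)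
  refine ⟨S, hS, le_sq_sigmaMin2 _ fun v hv => ?_⟩
  rw [submatrix_mul_transpose_eq_gramOn]
  exact le_dotProduct_mulVec_of_forall_lt_det_pos (isSymm_gramOn A S) hdet hv

/-- If `A ∈ ℝ^{2×m}` has orthonormal rows (`AAᵀ = I₂`) and `m > k ≥ 2`, then there exists
`S₀ ⊆ [m]` of size `k` with `σ_min(A_{S₀})² ≥ (k - √(k(m-k)/(m-1)))/m`. -/
theorem stmt_14 (m k : ℕ) (hk : 2 ≤ k) (hkm : k < m)
    (A : Matrix (Fin 2) (Fin m) ℝ) (hA : A * Aᵀ = 1) :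
    ∃ S : Finset (Fin m), S.card = k ∧
      sigmaMin2 (A.submatrix id (fun j : S => (j : Fin m))) ^ 2 ≥
        ((k : ℝ) - Real.sqrt ((k : ℝ) * ((m : ℝ) - k) / ((m : ℝ) - 1))) / m :=
  stmt_14_general m k hkm A hA
end

section
/- Let 3 ≤ k < m be integers and let f(x) = m(m-1)(m-2)x³ - 3k(m-1)(m-2)x² + 3k(k-1)(m-2)x - k(k-1)(k-2). Then f has three real roots, and its smallest root equals k/m + (2/m)·√(k(m-k)/(m-1))·cos((1/3)·arccos(((m-2k)/(m-2))·√((m-1)/(k(m-k)))) + 2π/3). -/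
open Polynomial Real

/-! The substitution `x = k/m + (2s/m) t`, with `s = √(k(m-k)/(m-1))`, turns `f` into a positive
multiple of `4t³ - 3t - c`, where `c = ((m-2k)/(m-2)) √((m-1)/(k(m-k)))`; and `|c| ≤ 1` because
`(m-2)² k(m-k) - (m-2k)² (m-1) = m² (k-1)(m-k-1) ≥ 0`. Writing `c = cos 3φ` with
`φ = arccos(c)/3 ∈ [0, π/3]`, the triple-angle formula gives the roots `t = cos φ, cos (φ ± 2π/3)`,
and `cos (φ + 2π/3)` is the smallest since `cos` decreases on `[0, π]`. -/

theorem cos_add_two_pi_div_three (φ : ℝ) :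
    cos (φ + 2 * π / 3) = -cos φ / 2 - √3 / 2 * sin φ := by
  rw [show φ + 2 * π / 3 = π - (π / 3 - φ) by ring, cos_pi_sub, cos_sub, cos_pi_div_three,
    sin_pi_div_three]
  ring

theorem cos_sub_two_pi_div_three (φ : ℝ) :
    cos (φ - 2 * π / 3) = -cos φ / 2 + √3 / 2 * sin φ := by
  rw [show φ - 2 * π / 3 = -(π - (π / 3 + φ)) by ring, cos_neg, cos_pi_sub, cos_add,
    cos_pi_div_three, sin_pi_div_three]
  ring

theorem viete_factorization (h r φ x : ℝ) :
    4 * (x - h) ^ 3 - 3 * r ^ 2 * (x - h) - r ^ 3 * cos (3 * φ) =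
      4 * ((x - (h + r * cos φ)) * (x - (h + r * cos (φ + 2 * π / 3))) *
        (x - (h + r * cos (φ - 2 * π / 3)))) := by
  rw [cos_add_two_pi_div_three, cos_sub_two_pi_div_three, cos_three_mul]
  have h3 : √3 ^ 2 = 3 := sq_sqrt (by norm_num)
  linear_combination (r ^ 2 * sin φ ^ 2 * (x - h - r * cos φ)) * h3 +
    (3 * r ^ 2 * (x - h - r * cos φ)) * sin_sq_add_cos_sq φ

theorem cos_add_two_pi_div_three_le {φ : ℝ} (h0 : 0 ≤ φ) (h1 : φ ≤ π / 3) :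
    cos (φ + 2 * π / 3) ≤ cos φ ∧ cos (φ + 2 * π / 3) ≤ cos (φ - 2 * π / 3) := by
  constructor
  · exact cos_le_cos_of_nonneg_of_le_pi h0 (by linarith) (by linarith [pi_pos])
  · rw [← cos_neg (φ - _)]
    exact cos_le_cos_of_nonneg_of_le_pi (by linarith) (by linarith) (by linarith)

theorem cubic_eq_depressed {M K s c : ℝ} (hM : M ≠ 0) (hs : s ^ 2 * (M - 1) = K * (M - K))
    (hsc : s * c * (M - 2) = M - 2 * K) (x : ℝ) :
    M * (M - 1) * (M - 2) * x ^ 3 - 3 * K * (M - 1) * (M - 2) * x ^ 2 +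
        3 * K * (K - 1) * (M - 2) * x - K * (K - 1) * (K - 2) =
      M * (M - 1) * (M - 2) / 4 *
        (4 * (x - K / M) ^ 3 - 3 * (2 / M * s) ^ 2 * (x - K / M) - (2 / M * s) ^ 3 * c) := by
  linear_combination (norm := skip)
    (3 * (M - 2) * (x - K / M) / M + 2 * s * c * (M - 2) / M ^ 2) * hs
      + 2 * K * (M - K) / M ^ 2 * hsc
  field_simp
  ring

theorem sqrt_div_sub_one_sq_mul {M K : ℝ} (hK : 0 ≤ K) (hKM : K ≤ M) (hM : 1 < M) :
    √(K * (M - K) / (M - 1)) ^ 2 * (M - 1) = K * (M - K) := by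
  rw [sq_sqrt (by apply div_nonneg <;> nlinarith)]
  field_simp [(by linarith : M - 1 ≠ 0)]

theorem sqrt_mul_viete_arg {M K : ℝ} (hK : 0 < K) (hKM : K < M) (hM : 2 < M) :
    √(K * (M - K) / (M - 1)) * ((M - 2 * K) / (M - 2) * √((M - 1) / (K * (M - K)))) * (M - 2)
      = M - 2 * K := by
  have hpos : 0 < K * (M - K) / (M - 1) := by apply div_pos <;> nlinarith
  rw [← inv_div (K * (M - K)), sqrt_inv, mul_left_comm, mul_inv_cancel₀ (sqrt_pos.2 hpos).ne',
    mul_one, div_mul_cancel₀ _ (sub_pos.2 hM).ne']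

theorem viete_arg_mem_Icc {M K : ℝ} (hK : 1 ≤ K) (hKM : K + 1 ≤ M) :
    (M - 2 * K) / (M - 2) * √((M - 1) / (K * (M - K))) ∈ Set.Icc (-1) 1 := by
  rw [Set.mem_Icc, ← abs_le, ← sq_le_one_iff_abs_le_one, mul_pow, div_pow,
    sq_sqrt (by apply div_nonneg <;> nlinarith), div_mul_div_comm]
  apply div_le_one_of_le₀ _ (mul_nonneg (sq_nonneg _) (by nlinarith))
  have hgap : (M - 2) ^ 2 * (K * (M - K)) - (M - 2 * K) ^ 2 * (M - 1) =
      M ^ 2 * ((K - 1) * (M - K - 1)) := by ring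
  have : 0 ≤ M ^ 2 * ((K - 1) * (M - K - 1)) := by
    apply mul_nonneg (sq_nonneg M) (mul_nonneg _ _) <;> linarith
  linarith

theorem card_roots_eq_three_of_eval_eq_factor {p : ℝ[X]} {a x₀ x₁ x₂ : ℝ} (ha : a ≠ 0)
    (hp : ∀ x, p.eval x = a * ((x - x₀) * (x - x₁) * (x - x₂))) : p.roots.card = 3 := by
  have hfac : p = C a * ((X - C x₀) * (X - C x₁) * (X - C x₂)) := by
    apply Polynomial.funext
    intro x
    simp [hp]
  rw [hfac, roots_C_mul _ ha, roots_mul (by simp [X_sub_C_ne_zero]),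
    roots_mul (by simp [X_sub_C_ne_zero])]
  simp

theorem isLeast_zeros_of_eq_factor {f : ℝ → ℝ} {a x₀ x₁ x₂ : ℝ} (ha : a ≠ 0)
    (hf : ∀ x, f x = a * ((x - x₀) * (x - x₁) * (x - x₂))) (h₀ : x₁ ≤ x₀) (h₂ : x₁ ≤ x₂) :
    IsLeast {x | f x = 0} x₁ := by
  refine ⟨by simp [hf], fun x (hx : f x = 0) => ?_⟩
  simp only [hf, mul_eq_zero, ha, sub_eq_zero, false_or] at hx
  rcases hx with (rfl | rfl) | rfl
  exacts [h₀, le_rfl, h₂]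

/-- For integers `3 ≤ k < m`, the cubic
`f(x) = m(m-1)(m-2)x³ - 3k(m-1)(m-2)x² + 3k(k-1)(m-2)x - k(k-1)(k-2)` has three real
roots (with multiplicity), and its smallest root is
`k/m + (2/m)√(k(m-k)/(m-1)) cos((1/3) arccos(((m-2k)/(m-2))√((m-1)/(k(m-k)))) + 2π/3)`. -/
theorem stmt_17 (m k : ℕ) (hk : 3 ≤ k) (hkm : k < m) :
    (C ((m : ℝ) * ((m : ℝ) - 1) * ((m : ℝ) - 2)) * X ^ 3 -
        C (3 * (k : ℝ) * ((m : ℝ) - 1) * ((m : ℝ) - 2)) * X ^ 2 +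
        C (3 * (k : ℝ) * ((k : ℝ) - 1) * ((m : ℝ) - 2)) * X -
        C ((k : ℝ) * ((k : ℝ) - 1) * ((k : ℝ) - 2))).roots.card = 3 ∧
    IsLeast {x : ℝ |
        (m : ℝ) * ((m : ℝ) - 1) * ((m : ℝ) - 2) * x ^ 3 -
          3 * k * ((m : ℝ) - 1) * ((m : ℝ) - 2) * x ^ 2 +
          3 * k * ((k : ℝ) - 1) * ((m : ℝ) - 2) * x -
          (k : ℝ) * ((k : ℝ) - 1) * ((k : ℝ) - 2) = 0}
      ((k : ℝ) / m + (2 / m) * Real.sqrt ((k : ℝ) * ((m : ℝ) - k) / ((m : ℝ) - 1)) *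
        Real.cos ((1 / 3) * Real.arccos ((((m : ℝ) - 2 * k) / ((m : ℝ) - 2)) *
            Real.sqrt (((m : ℝ) - 1) / ((k : ℝ) * ((m : ℝ) - k)))) + 2 * Real.pi / 3)) := by
  have hK : (3 : ℝ) ≤ k := by exact_mod_cast hk
  have hKM : (k : ℝ) + 1 ≤ m := by exact_mod_cast hkm
  have hlead : (m : ℝ) * (m - 1) * (m - 2) ≠ 0 := by
    apply mul_ne_zero (mul_ne_zero _ _) _ <;> linarith
  set c := ((m : ℝ) - 2 * k) / (m - 2) * √((m - 1) / (k * (m - k))) with hc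
  obtain ⟨hc₁, hc₂⟩ : c ∈ Set.Icc (-1) 1 := viete_arg_mem_Icc (by linarith) hKM
  set φ := 1 / 3 * arccos c with hφ
  have hcos : cos (3 * φ) = c := by
    rw [hφ, show 3 * (1 / 3 * arccos c) = arccos c by ring, cos_arccos hc₁ hc₂]
  have hφ₀ : 0 ≤ φ := mul_nonneg (by norm_num) (arccos_nonneg c)
  have hφ₁ : φ ≤ π / 3 := by linarith [arccos_le_pi c]
  have hfac : ∀ x : ℝ, (m : ℝ) * (m - 1) * (m - 2) * x ^ 3 - 3 * k * (m - 1) * (m - 2) * x ^ 2 +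
      3 * k * (k - 1) * (m - 2) * x - k * (k - 1) * (k - 2) = (m : ℝ) * (m - 1) * (m - 2) *
      ((x - (k / m + 2 / m * √(k * (m - k) / (m - 1)) * cos φ)) *
        (x - (k / m + 2 / m * √(k * (m - k) / (m - 1)) * cos (φ + 2 * π / 3))) *
        (x - (k / m + 2 / m * √(k * (m - k) / (m - 1)) * cos (φ - 2 * π / 3)))) := by
    intro x
    rw [cubic_eq_depressed (by linarith)
      (sqrt_div_sub_one_sq_mul (by linarith) (by linarith) (by linarith))
      (sqrt_mul_viete_arg (by linarith) (by linarith) (by linarith)), ← hc, ← hcos,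
      viete_factorization]
    ring
  obtain ⟨hle₀, hle₂⟩ := cos_add_two_pi_div_three_le hφ₀ hφ₁
  refine ⟨card_roots_eq_three_of_eval_eq_factor hlead fun x => by
    simpa only [eval_sub, eval_add, eval_mul, eval_C, eval_pow, eval_X] using hfac x,
    isLeast_zeros_of_eq_factor hlead hfac ?_ ?_⟩ <;> gcongr
end

section
/- Let A ∈ ℝ^{n×m} with A A^T = I_n and let n+2 ≤ m, n ≥ 2. Define α by: α = 1/2 + (1/2)√(1 - 4((n-1)/n²)(1 - (n-1)(m-n+1)/((m-n)n))) if m ≥ 2n, and α = 1/2 + (1/2)√(1 - 4(m-n-1)(2n+1-m)/((m-n)³ n)) if m ≤ 2n. Then α < 1, and hence the bound 1/(α·n(m-n)+1) is strictly larger than the Hong–Pan bound 1/(n(m-n)+1). -/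
/-!
In both cases `α = 1/2 + 1/2 √(1 - δ)` with `δ > 0`, so `1/2 ≤ α < 1`, and `x ↦ 1/(x N + 1)` is
strictly decreasing on `[0, ∞)` for `N > 0`.
-/

lemma half_add_half_mul_sqrt_one_sub_lt_one {δ : ℝ} (hδ : 0 < δ) :
    1 / 2 + 1 / 2 * √(1 - δ) < 1 := by
  have : √(1 - δ) < 1 := by
    rw [Real.sqrt_lt' one_pos, one_pow]
    linarith
  linarith

lemma one_div_add_one_lt_one_div_mul_add_one {a N : ℝ} (ha₀ : 0 ≤ a) (ha₁ : a < 1) (hN : 0 < N) :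
    1 / (N + 1) < 1 / (a * N + 1) :=
  one_div_lt_one_div_of_lt (by positivity) (by nlinarith)

lemma defect_pos_of_two_mul_sub_one_lt {m n : ℝ} (hn : 1 < n) (hm : 2 * n - 1 < m) :
    0 < 4 * ((n - 1) / n ^ 2) * (1 - (n - 1) * (m - n + 1) / ((m - n) * n)) := by
  have hmn : 0 < m - n := by linarith
  have hfrac : (n - 1) * (m - n + 1) / ((m - n) * n) < 1 := by
    rw [div_lt_one (by positivity)]
    nlinarith
  have : 0 < n - 1 := by linarith
  have : 0 < 1 - (n - 1) * (m - n + 1) / ((m - n) * n) := by linarith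
  positivity

lemma defect_pos_of_lt_two_mul_add_one {m n : ℝ} (hn : 0 < n) (hm₁ : n + 1 < m)
    (hm₂ : m < 2 * n + 1) :
    0 < 4 * ((m - n - 1) * (2 * n + 1 - m)) / ((m - n) ^ 3 * n) := by
  have : 0 < m - n - 1 := by linarith
  have : 0 < 2 * n + 1 - m := by linarith
  have : 0 < m - n := by linarith
  positivity

/-- For integers `m ≥ n+2`, `n ≥ 2`, the quantity `α` of Corollary 1.3 (defined by the
`m ≥ 2n` / `m ≤ 2n` case split) satisfies `α < 1`, hence
`1/(α n(m-n)+1) > 1/(n(m-n)+1)`, strictly improving the Hong–Pan bound. -/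
theorem stmt_18 (m n : ℕ) (hm : n + 2 ≤ m) (hn : 2 ≤ n) :
    let α : ℝ :=
      if 2 * n ≤ m then
        1 / 2 + 1 / 2 * Real.sqrt (1 - 4 * (((n : ℝ) - 1) / (n : ℝ) ^ 2) *
          (1 - ((n : ℝ) - 1) * ((m : ℝ) - n + 1) / (((m : ℝ) - n) * n)))
      else
        1 / 2 + 1 / 2 * Real.sqrt (1 - 4 * (((m : ℝ) - n - 1) * (2 * (n : ℝ) + 1 - m)) /
          (((m : ℝ) - n) ^ 3 * n))
    α < 1 ∧ 1 / (α * n * ((m : ℝ) - n) + 1) > 1 / ((n : ℝ) * ((m : ℝ) - n) + 1) := by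
  intro α
  have hmr : (n : ℝ) + 2 ≤ m := by exact_mod_cast hm
  have hnr : (2 : ℝ) ≤ n := by exact_mod_cast hn
  have hα₁ : α < 1 := by
    unfold α
    split_ifs with h
    · have h2n : 2 * (n : ℝ) ≤ m := by exact_mod_cast h
      exact half_add_half_mul_sqrt_one_sub_lt_one
        (defect_pos_of_two_mul_sub_one_lt (by linarith) (by linarith))
    · have h2n : (m : ℝ) < 2 * n := by exact_mod_cast Nat.lt_of_not_le h
      exact half_add_half_mul_sqrt_one_sub_lt_one
        (defect_pos_of_lt_two_mul_add_one (by linarith) (by linarith) (by linarith))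
  have hα₀ : 0 ≤ α := by
    unfold α
    split_ifs <;> positivity
  refine ⟨hα₁, ?_⟩
  rw [mul_assoc]
  exact one_div_add_one_lt_one_div_mul_add_one hα₀ hα₁ (by nlinarith)
end

section
/- Let m, n, k be integers with n ≤ k ≤ n+3 and k+1 < m, n ≥ 1. Then (k-n+1)/(n(m-k) + k-n+1) > ((√((k+1)(m-n)) - √(n(m-k-1)))²)/m². -/
/-!
Write `d = k - n + 1`, `a = (k + 1)(m - n)` and `b = n(m - k - 1)`, so that `a - b = m d`.
Rationalising, `(√a - √b)² (√a + √b)² = m² d²`, and `(√a + √b)² = a + b + 2√(ab) ≥ a + 3b`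
because `b ≤ a`. The claim thus follows from the polynomial inequality
`d (n(m - k) + d) < a + 3b`, whose gap factors as `(m - k - 1)(d + n(n + 3 - k))`;
this is where `k ≤ n + 3` enters.
-/

namespace Real

lemma add_three_mul_le_sq_sqrt_add_sqrt {a b : ℝ} (hb : 0 ≤ b) (hba : b ≤ a) :
    a + 3 * b ≤ (√a + √b) ^ 2 := by
  have hsqrt : b ≤ √a * √b := by
    calc b = √b * √b := (mul_self_sqrt hb).symm
      _ ≤ √a * √b := mul_le_mul_of_nonneg_right (sqrt_le_sqrt hba) (sqrt_nonneg b)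
  nlinarith [sq_sqrt hb, sq_sqrt (hb.trans hba)]

lemma sq_sqrt_sub_sqrt_mul_le {a b : ℝ} (hb : 0 ≤ b) (hba : b ≤ a) :
    (√a - √b) ^ 2 * (a + 3 * b) ≤ (a - b) ^ 2 := by
  calc (√a - √b) ^ 2 * (a + 3 * b) ≤ (√a - √b) ^ 2 * (√a + √b) ^ 2 :=
        mul_le_mul_of_nonneg_left (add_three_mul_le_sq_sqrt_add_sqrt hb hba) (sq_nonneg _)
    _ = (a - b) ^ 2 := by
        rw [← mul_pow, mul_comm, ← sq_sub_sq, sq_sqrt (hb.trans hba), sq_sqrt hb]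

end Real

lemma mul_add_lt_add_three_mul {m n k : ℝ} (hn : 0 ≤ n) (hnk : n ≤ k) (hkn3 : k ≤ n + 3)
    (hkm : k + 1 < m) :
    (k - n + 1) * (n * (m - k) + (k - n + 1)) < (k + 1) * (m - n) + 3 * (n * (m - k - 1)) := by
  have hgap : (k + 1) * (m - n) + 3 * (n * (m - k - 1)) - (k - n + 1) * (n * (m - k) + (k - n + 1))
      = (m - k - 1) * ((k - n + 1) + n * (n + 3 - k)) := by ring
  have hpos : 0 < (m - k - 1) * ((k - n + 1) + n * (n + 3 - k)) :=
    mul_pos (by linarith) (by nlinarith [mul_nonneg hn (by linarith : (0 : ℝ) ≤ n + 3 - k)])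
  linarith

theorem stmt_19_general (m n k : ℕ) (hnk : n ≤ k) (hkn3 : k ≤ n + 3) (hkm : k + 1 < m) :
    ((k : ℝ) - n + 1) / ((n : ℝ) * ((m : ℝ) - k) + ((k : ℝ) - n + 1)) >
      (Real.sqrt (((k : ℝ) + 1) * ((m : ℝ) - n)) -
          Real.sqrt ((n : ℝ) * ((m : ℝ) - k - 1))) ^ 2 / (m : ℝ) ^ 2 := by
  have hnk' : (n : ℝ) ≤ k := by exact_mod_cast hnk
  have hkn3' : (k : ℝ) ≤ n + 3 := by exact_mod_cast hkn3
  have hkm' : (k : ℝ) + 1 < m := by exact_mod_cast hkm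
  have hpoly := mul_add_lt_add_three_mul (Nat.cast_nonneg n) hnk' hkn3' hkm'
  set d : ℝ := (k : ℝ) - n + 1
  set a : ℝ := ((k : ℝ) + 1) * ((m : ℝ) - n)
  set b : ℝ := (n : ℝ) * ((m : ℝ) - k - 1)
  have hd : 0 < d := by linarith
  have hm : (0 : ℝ) < m := by linarith
  have hb : 0 ≤ b := mul_nonneg (Nat.cast_nonneg n) (by linarith)
  have hab : a - b = m * d := by ring
  have hba : b < a := sub_pos.1 (hab ▸ mul_pos hm hd)
  have hgap : 0 < (√a - √b) ^ 2 := pow_pos (sub_pos.2 (Real.sqrt_lt_sqrt hb hba)) 2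
  rw [gt_iff_lt, div_lt_div_iff₀ (by positivity) (by nlinarith)]
  refine lt_of_mul_lt_mul_left ?_ hd.le
  calc d * ((√a - √b) ^ 2 * (n * (m - k) + d)) = (√a - √b) ^ 2 * (d * (n * (m - k) + d)) := by ring
    _ < (√a - √b) ^ 2 * (a + 3 * b) := mul_lt_mul_of_pos_left hpoly hgap
    _ ≤ (a - b) ^ 2 := Real.sq_sqrt_sub_sqrt_mul_le hb hba.le
    _ = d * (d * m ^ 2) := by rw [hab]; ring

/-- For integers `n ≤ k ≤ n+3`, `k+1 < m`, `n ≥ 1`: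
`(k-n+1)/(n(m-k) + k-n+1) > (√((k+1)(m-n)) - √(n(m-k-1)))²/m²`. -/
theorem stmt_19 (m n k : ℕ) (hn : 1 ≤ n) (hnk : n ≤ k) (hkn3 : k ≤ n + 3) (hkm : k + 1 < m) :
    ((k : ℝ) - n + 1) / ((n : ℝ) * ((m : ℝ) - k) + ((k : ℝ) - n + 1)) >
      (Real.sqrt (((k : ℝ) + 1) * ((m : ℝ) - n)) -
          Real.sqrt ((n : ℝ) * ((m : ℝ) - k - 1))) ^ 2 / (m : ℝ) ^ 2 :=
  stmt_19_general m n k hnk hkn3 hkm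
end
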